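/- arXiv:math/0311154 — 2 statements merged into one kernel-verified Lean document; each statement's English description precedes it below -/
import Mathlib

section
/- Let (Γ ⇉ M, ω + Ω) be a pre-quasi-symplectic groupoid and (X₁ →^{J₁} M, ω₁), (X₂ →^{J₂} M, ω₂) pre-Hamiltonian Γ-spaces. Assume the quotient Γ\(X̄₂ ×_M X₁) by the diagonal Γ-action is a smooth manifold. Then the closed 2-form i*(−ω₂, ω₁) on X̄₂ ×_M X₁, where i: X̄₂ ×_M X₁ → X₂ × X₁ is the natural embedding, descends to a closed 2-form on Γ\(X̄₂ ×_M X₁); hence the classical intertwiner space X̄₂ ×_Γ X₁ = Γ\(X̄₂ ×_M X₁) is a presymplectic manifold. -/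
/-!
Abstract framework for the prequantization of pre-quasi-symplectic groupoids
and their pre-Hamiltonian spaces (following Laurent-Gengoux–Xu).

Smooth manifolds are abstracted as types, smooth maps as functions.  A
`DiffCtxCore` provides, for every such "space", abelian groups of differential
forms and of (piecewise smooth singular) chains, together with the exterior
derivative, pull-back, push-forward, singular boundary and the integration
pairing; `DiffCtxLaws` records the expected equational laws.
-/

noncomputable section

set_option autoImplicit false
set_option maxHeartbeats 1000000

/-- Abstract differential-geometric context: `Form X k` plays the role of the
smooth `k`-forms `Ω^k(X)` and `Chain X k` the role of the group of piecewise
smooth singular `k`-chains `C_k(X, ℤ)` (with real coefficients allowed in the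
pairing).  `circleCycle` is the fundamental `1`-cycle `C_{S¹}` of the circle
and `circleForm` the normalized Maurer–Cartan form `dt/2π` on `S¹`. -/
structure DiffCtxCore where
  Form : Type → ℕ → Type
  formGroup : ∀ X k, AddCommGroup (Form X k)
  pull : ∀ {X Y : Type}, (X → Y) → ∀ {k : ℕ}, Form Y k → Form X k
  d : ∀ {X : Type} {k : ℕ}, Form X k → Form X (k + 1)
  Chain : Type → ℕ → Type
  chainGroup : ∀ X k, AddCommGroup (Chain X k)
  push : ∀ {X Y : Type}, (X → Y) → ∀ {k : ℕ}, Chain X k → Chain Y k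
  bd : ∀ {X : Type} {k : ℕ}, Chain X (k + 1) → Chain X k
  pair : ∀ {X : Type} {k : ℕ}, Chain X k → Form X k → ℝ
  circleCycle : Chain Circle 1
  circleForm : Form Circle 1

instance (C : DiffCtxCore) (X : Type) (k : ℕ) : AddCommGroup (C.Form X k) :=
  C.formGroup X k

instance (C : DiffCtxCore) (X : Type) (k : ℕ) : AddCommGroup (C.Chain X k) :=
  C.chainGroup X k

/-- The laws satisfied by the smooth world: functoriality and additivity of
pull-back/push-forward, `d ∘ d = 0`, Stokes' formula for the pairing, the
change-of-variables formula, and the normalization `∫_{S¹} dt/2π = 1`. -/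
structure DiffCtxLaws (C : DiffCtxCore) : Prop where
  pull_add : ∀ {X Y : Type} (f : X → Y) {k : ℕ} (a b : C.Form Y k),
    C.pull f (a + b) = C.pull f a + C.pull f b
  pull_id : ∀ {X : Type} {k : ℕ} (a : C.Form X k), C.pull (fun x => x) a = a
  pull_comp : ∀ {X Y Z : Type} (f : X → Y) (g : Y → Z) {k : ℕ} (a : C.Form Z k),
    C.pull (fun x => g (f x)) a = C.pull f (C.pull g a)
  d_add : ∀ {X : Type} {k : ℕ} (a b : C.Form X k), C.d (a + b) = C.d a + C.d b
  d_d : ∀ {X : Type} {k : ℕ} (a : C.Form X k), C.d (C.d a) = 0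
  pull_d : ∀ {X Y : Type} (f : X → Y) {k : ℕ} (a : C.Form Y k),
    C.pull f (C.d a) = C.d (C.pull f a)
  push_add : ∀ {X Y : Type} (f : X → Y) {k : ℕ} (a b : C.Chain X k),
    C.push f (a + b) = C.push f a + C.push f b
  push_id : ∀ {X : Type} {k : ℕ} (a : C.Chain X k), C.push (fun x => x) a = a
  push_comp : ∀ {X Y Z : Type} (f : X → Y) (g : Y → Z) {k : ℕ} (a : C.Chain X k),
    C.push (fun x => g (f x)) a = C.push g (C.push f a)
  bd_add : ∀ {X : Type} {k : ℕ} (a b : C.Chain X (k + 1)), C.bd (a + b) = C.bd a + C.bd b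
  bd_bd : ∀ {X : Type} {k : ℕ} (a : C.Chain X (k + 2)), C.bd (C.bd a) = 0
  push_bd : ∀ {X Y : Type} (f : X → Y) {k : ℕ} (a : C.Chain X (k + 1)),
    C.push f (C.bd a) = C.bd (C.push f a)
  pair_add_left : ∀ {X : Type} {k : ℕ} (a b : C.Chain X k) (w : C.Form X k),
    C.pair (a + b) w = C.pair a w + C.pair b w
  pair_add_right : ∀ {X : Type} {k : ℕ} (a : C.Chain X k) (w v : C.Form X k),
    C.pair a (w + v) = C.pair a w + C.pair a v
  pair_zsmul : ∀ {X : Type} {k : ℕ} (n : ℤ) (a : C.Chain X k) (w : C.Form X k),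
    C.pair (n • a) w = n * C.pair a w
  pair_push : ∀ {X Y : Type} (f : X → Y) {k : ℕ} (a : C.Chain X k) (w : C.Form Y k),
    C.pair (C.push f a) w = C.pair a (C.pull f w)
  pair_bd : ∀ {X : Type} {k : ℕ} (a : C.Chain X (k + 1)) (w : C.Form X k),
    C.pair (C.bd a) w = C.pair a (C.d w)
  bd_circleCycle : C.bd C.circleCycle = 0
  pair_circle : C.pair C.circleCycle C.circleForm = 1

/-! ## Lie groupoids (smoothness abstracted) -/

/-- The data of a (Lie) groupoid `Γ ⇉ M` with objects `O` and arrows `A`: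
source, target, units, partially defined composition (an arrow `g` may be
composed with `h` whenever `s g = t h`) and inversion. -/
structure GrpdOn (O A : Type) where
  s : A → O
  t : A → O
  unit : O → A
  comp : ∀ g h : A, s g = t h → A
  inv : A → A

/-- The groupoid axioms. -/
structure GrpdLaws {O A : Type} (G : GrpdOn O A) : Prop where
  s_unit : ∀ m, G.s (G.unit m) = m
  t_unit : ∀ m, G.t (G.unit m) = m
  s_comp : ∀ g h hgh, G.s (G.comp g h hgh) = G.s h
  t_comp : ∀ g h hgh, G.t (G.comp g h hgh) = G.t g
  s_inv : ∀ g, G.s (G.inv g) = G.t g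
  t_inv : ∀ g, G.t (G.inv g) = G.s g
  comp_unit : ∀ (g : A) (m : O), G.s g = m → ∀ h, G.comp g (G.unit m) h = g
  unit_comp : ∀ (g : A) (m : O), G.t g = m → ∀ h, G.comp (G.unit m) g h = g
  comp_inv : ∀ g h, G.comp g (G.inv g) h = G.unit (G.t g)
  inv_comp : ∀ g h, G.comp (G.inv g) g h = G.unit (G.s g)
  assoc : ∀ g h k hgh hhk h1 h2,
    G.comp (G.comp g h hgh) k h1 = G.comp g (G.comp h k hhk) h2

namespace GrpdOn

variable {O A : Type} (G : GrpdOn O A)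

/-- Composable pairs of arrows: the level `Γ₂` of the nerve. -/
def C2 : Type := { p : A × A // G.s p.1 = G.t p.2 }

/-- Composable triples of arrows: the level `Γ₃` of the nerve. -/
def C3 : Type :=
  { p : A × A × A // G.s p.1 = G.t p.2.1 ∧ G.s p.2.1 = G.t p.2.2 }

/-- The multiplication face map `Γ₂ → Γ₁`. -/
def m2 : G.C2 → A := fun p => G.comp p.val.1 p.val.2 p.property

/-- The face `d₀ : Γ₂ → Γ₁`, `(g, h) ↦ h`. -/
def f20 : G.C2 → A := fun p => p.val.2

/-- The face `d₂ : Γ₂ → Γ₁`, `(g, h) ↦ g`. -/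
def f22 : G.C2 → A := fun p => p.val.1

variable {G}

/-- The face `d₀ : Γ₃ → Γ₂`. -/
def f30 : G.C3 → G.C2 := fun p => ⟨(p.val.2.1, p.val.2.2), p.property.2⟩

/-- The face `d₃ : Γ₃ → Γ₂`. -/
def f33 : G.C3 → G.C2 := fun p => ⟨(p.val.1, p.val.2.1), p.property.1⟩

/-- The face `d₁ : Γ₃ → Γ₂`. -/
def f31 (hG : GrpdLaws G) : G.C3 → G.C2 := fun p =>
  ⟨(G.comp p.val.1 p.val.2.1 p.property.1, p.val.2.2),
    (hG.s_comp _ _ _).trans p.property.2⟩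

/-- The face `d₂ : Γ₃ → Γ₂`. -/
def f32 (hG : GrpdLaws G) : G.C3 → G.C2 := fun p =>
  ⟨(p.val.1, G.comp p.val.2.1 p.val.2.2 p.property.2),
    p.property.1.trans (hG.t_comp _ _ _).symm⟩

end GrpdOn

/-! ## The de Rham double complex of a groupoid (total degrees ≤ 3) -/

variable (C : DiffCtxCore)

/-- Simplicial differential `∂ : Ω^k(Γ₀) → Ω^k(Γ₁)`. -/
def bO1 {O A : Type} (G : GrpdOn O A) {k : ℕ} (a : C.Form O k) : C.Form A k :=
  C.pull G.s a - C.pull G.t a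

/-- Simplicial differential `∂ : Ω^k(Γ₁) → Ω^k(Γ₂)`. -/
def bA2 {O A : Type} (G : GrpdOn O A) {k : ℕ} (a : C.Form A k) : C.Form G.C2 k :=
  C.pull G.f20 a - C.pull G.m2 a + C.pull G.f22 a

/-- Simplicial differential `∂ : Ω^k(Γ₂) → Ω^k(Γ₃)`. -/
def b23 {O A : Type} {G : GrpdOn O A} (hG : GrpdLaws G) {k : ℕ}
    (a : C.Form G.C2 k) : C.Form G.C3 k :=
  C.pull GrpdOn.f30 a - C.pull (GrpdOn.f31 hG) a + C.pull (GrpdOn.f32 hG) a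
    - C.pull GrpdOn.f33 a

/-- Simplicial differential on chains `∂ : C_k(Γ₁) → C_k(Γ₀)`. -/
def cb10 {O A : Type} (G : GrpdOn O A) {k : ℕ} (c : C.Chain A k) : C.Chain O k :=
  C.push G.s c - C.push G.t c

/-- Simplicial differential on chains `∂ : C_k(Γ₂) → C_k(Γ₁)`. -/
def cb21 {O A : Type} (G : GrpdOn O A) {k : ℕ} (c : C.Chain G.C2 k) : C.Chain A k :=
  C.push G.f20 c - C.push G.m2 c + C.push G.f22 c

/-- Simplicial differential on chains `∂ : C_k(Γ₃) → C_k(Γ₂)`. -/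
def cb32 {O A : Type} {G : GrpdOn O A} (hG : GrpdLaws G) {k : ℕ}
    (c : C.Chain G.C3 k) : C.Chain G.C2 k :=
  C.push GrpdOn.f30 c - C.push (GrpdOn.f31 hG) c + C.push (GrpdOn.f32 hG) c
    - C.push GrpdOn.f33 c

/-- Total de Rham `1`-cochains `Ω¹(Γ₀) ⊕ Ω⁰(Γ₁)`. -/
abbrev Coch1 {O A : Type} (G : GrpdOn O A) : Type := C.Form O 1 × C.Form A 0

/-- Total de Rham `2`-cochains `Ω²(Γ₀) ⊕ Ω¹(Γ₁) ⊕ Ω⁰(Γ₂)`. -/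
abbrev Coch2 {O A : Type} (G : GrpdOn O A) : Type :=
  C.Form O 2 × C.Form A 1 × C.Form G.C2 0

/-- Total de Rham `3`-cochains `Ω³(Γ₀) ⊕ Ω²(Γ₁) ⊕ Ω¹(Γ₂) ⊕ Ω⁰(Γ₃)`. -/
abbrev Coch3 {O A : Type} (G : GrpdOn O A) : Type :=
  C.Form O 3 × C.Form A 2 × C.Form G.C2 1 × C.Form G.C3 0

/-- Total differential `δ = (-1)^p d + ∂` from total degree 1 to 2. -/
def delta12 {O A : Type} (G : GrpdOn O A) (a : Coch1 C G) : Coch2 C G :=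
  (C.d a.1, bO1 C G a.1 - C.d a.2, bA2 C G a.2)

/-- Total differential `δ = (-1)^p d + ∂` from total degree 2 to 3. -/
def delta23 {O A : Type} {G : GrpdOn O A} (hG : GrpdLaws G) (a : Coch2 C G) :
    Coch3 C G :=
  (C.d a.1, bO1 C G a.1 - C.d a.2.1, bA2 C G a.2.1 + C.d a.2.2, b23 C hG a.2.2)

/-- Total singular chains of degree 1. -/
abbrev Chn1 {O A : Type} (G : GrpdOn O A) : Type := C.Chain O 1 × C.Chain A 0

/-- Total singular chains of degree 2. -/
abbrev Chn2 {O A : Type} (G : GrpdOn O A) : Type :=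
  C.Chain O 2 × C.Chain A 1 × C.Chain G.C2 0

/-- Total singular chains of degree 3. -/
abbrev Chn3 {O A : Type} (G : GrpdOn O A) : Type :=
  C.Chain O 3 × C.Chain A 2 × C.Chain G.C2 1 × C.Chain G.C3 0

/-- Total boundary `δ = (-1)^p d + ∂` from total degree 2 to 1. -/
def deltaC21 {O A : Type} (G : GrpdOn O A) (c : Chn2 C G) : Chn1 C G :=
  (C.bd c.1 + cb10 C G c.2.1, -C.bd c.2.1 + cb21 C G c.2.2)

/-- Total boundary `δ = (-1)^p d + ∂` from total degree 3 to 2. -/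
def deltaC32 {O A : Type} {G : GrpdOn O A} (hG : GrpdLaws G) (c : Chn3 C G) :
    Chn2 C G :=
  (C.bd c.1 + cb10 C G c.2.1, -C.bd c.2.1 + cb21 C G c.2.2.1,
    C.bd c.2.2.1 + cb32 C hG c.2.2.2)

/-- Pairing of total 2-chains with total 2-cochains. -/
def pair2 {O A : Type} (G : GrpdOn O A) (c : Chn2 C G) (a : Coch2 C G) : ℝ :=
  C.pair c.1 a.1 + C.pair c.2.1 a.2.1 + C.pair c.2.2 a.2.2

/-- Pairing of total 3-chains with total 3-cochains. -/
def pair3 {O A : Type} (G : GrpdOn O A) (c : Chn3 C G) (a : Coch3 C G) : ℝ :=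
  C.pair c.1 a.1 + C.pair c.2.1 a.2.1 + C.pair c.2.2.1 a.2.2.1
    + C.pair c.2.2.2 a.2.2.2

/-- An integral total de Rham 2-cocycle pairs integrally with every total
2-cycle. -/
def IsIntegral2 {O A : Type} (G : GrpdOn O A) (a : Coch2 C G) : Prop :=
  ∀ Z : Chn2 C G, deltaC21 C G Z = 0 → ∃ n : ℤ, pair2 C G Z a = (n : ℝ)

/-- An integral total de Rham 3-cocycle pairs integrally with every total
3-cycle. -/
def IsIntegral3 {O A : Type} {G : GrpdOn O A} (hG : GrpdLaws G) (a : Coch3 C G) :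
    Prop :=
  ∀ Z : Chn3 C G, deltaC32 C hG Z = 0 → ∃ n : ℤ, pair3 C G Z a = (n : ℝ)

/-! ## Homomorphisms of groupoids -/

/-- A homomorphism of (Lie) groupoids. -/
structure GrpdHom {O A O' A' : Type} (G : GrpdOn O A) (H : GrpdOn O' A') where
  fo : O → O'
  fa : A → A'
  map_s : ∀ g, H.s (fa g) = fo (G.s g)
  map_t : ∀ g, H.t (fa g) = fo (G.t g)
  map_unit : ∀ m, fa (G.unit m) = H.unit (fo m)
  map_comp : ∀ g h hgh h', fa (G.comp g h hgh) = H.comp (fa g) (fa h) h'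

namespace GrpdHom

variable {O A O' A' : Type} {G : GrpdOn O A} {H : GrpdOn O' A'}

/-- Induced map on composable pairs. -/
def c2 (f : GrpdHom G H) : G.C2 → H.C2 := fun p =>
  ⟨(f.fa p.val.1, f.fa p.val.2),
    (f.map_s _).trans ((congrArg f.fo p.property).trans (f.map_t _).symm)⟩

/-- Induced map on composable triples. -/
def c3 (f : GrpdHom G H) : G.C3 → H.C3 := fun p =>
  ⟨(f.fa p.val.1, f.fa p.val.2.1, f.fa p.val.2.2),
    ⟨(f.map_s _).trans ((congrArg f.fo p.property.1).trans (f.map_t _).symm),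
      (f.map_s _).trans ((congrArg f.fo p.property.2).trans (f.map_t _).symm)⟩⟩

end GrpdHom

/-- Pull-back of total 2-cochains along a groupoid homomorphism. -/
def pullCoch2 {O A O' A' : Type} {G : GrpdOn O A} {H : GrpdOn O' A'}
    (f : GrpdHom G H) (a : Coch2 C H) : Coch2 C G :=
  (C.pull f.fo a.1, C.pull f.fa a.2.1, C.pull f.c2 a.2.2)

/-- Pull-back of total 3-cochains along a groupoid homomorphism. -/
def pullCoch3 {O A O' A' : Type} {G : GrpdOn O A} {H : GrpdOn O' A'}
    (f : GrpdHom G H) (a : Coch3 C H) : Coch3 C G :=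
  (C.pull f.fo a.1, C.pull f.fa a.2.1, C.pull f.c2 a.2.2.1, C.pull f.c3 a.2.2.2)

/-- Push-forward of total 2-chains along a groupoid homomorphism. -/
def pushChn2 {O A O' A' : Type} {G : GrpdOn O A} {H : GrpdOn O' A'}
    (f : GrpdHom G H) (c : Chn2 C G) : Chn2 C H :=
  (C.push f.fo c.1, C.push f.fa c.2.1, C.push f.c2 c.2.2)

/-- Push-forward of total 3-chains along a groupoid homomorphism. -/
def pushChn3 {O A O' A' : Type} {G : GrpdOn O A} {H : GrpdOn O' A'}
    (f : GrpdHom G H) (c : Chn3 C G) : Chn3 C H :=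
  (C.push f.fo c.1, C.push f.fa c.2.1, C.push f.c2 c.2.2.1, C.push f.c3 c.2.2.2)

/-! ## Pre-quasi-symplectic groupoids -/

/-- A pre-quasi-symplectic structure on the groupoid `Γ ⇉ M`: a 2-form
`w ∈ Ω²(Γ)` and a 3-form `W ∈ Ω³(M)` with `dW = 0`, `dw = ∂W`, `∂w = 0`,
i.e. `w + W` is a 3-cocycle of the total de Rham complex. -/
structure PQS {O A : Type} (G : GrpdOn O A) where
  w : C.Form A 2
  W : C.Form O 3
  dW_eq : C.d W = 0
  dw_eq : C.d w = bO1 C G W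
  bw_eq : bA2 C G w = 0

variable {C}

/-- A pre-quasi-symplectic groupoid is exact if the 3-form on the base is
exact. -/
def PQS.IsExact {O A : Type} {G : GrpdOn O A} (P : PQS C G) : Prop :=
  ∃ b : C.Form O 2, C.d b = P.W

/-- A pre-quasi-symplectic groupoid is integral if `w + W` is an integral
3-cocycle. -/
def PQS.IsIntegral {O A : Type} {G : GrpdOn O A} (P : PQS C G)
    (hG : GrpdLaws G) : Prop :=
  IsIntegral3 C hG ((P.W, P.w, 0, 0) : Coch3 C G)

/-! ## Groupoid actions and transformation groupoids -/

variable (C)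

/-- A left action of the groupoid `Γ ⇉ M` on `J : X → M`. -/
structure ActionOn {O A : Type} (G : GrpdOn O A) (X : Type) where
  J : X → O
  act : ∀ (g : A) (x : X), G.s g = J x → X

/-- The axioms of a left groupoid action. -/
structure ActionLaws {O A X : Type} {G : GrpdOn O A} (r : ActionOn G X) : Prop where
  J_act : ∀ g x h, r.J (r.act g x h) = G.t g
  act_unit : ∀ x h, r.act (G.unit (r.J x)) x h = x
  act_comp : ∀ g h x hhx hgh h1 h2,
    r.act (G.comp g h hgh) x h1 = r.act g (r.act h x hhx) h2

namespace ActionOn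

variable {O A X : Type} {G : GrpdOn O A}

theorem act_congr (r : ActionOn G X) {g g' : A} (hg : g = g') (x : X)
    (h : G.s g = r.J x) (h' : G.s g' = r.J x) : r.act g x h = r.act g' x h' := by
  subst hg; rfl

/-- The space of arrows `Γ ×_M X` of the transformation groupoid. -/
def Mor (r : ActionOn G X) : Type := { p : A × X // G.s p.1 = r.J p.2 }

/-- The transformation groupoid `Γ ⋉ X ⇉ X` of a groupoid action. -/
def trans (r : ActionOn G X) (hG : GrpdLaws G) (hr : ActionLaws r) :
    GrpdOn X r.Mor where
  s p := p.val.2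
  t p := r.act p.val.1 p.val.2 p.property
  unit x := ⟨(G.unit (r.J x), x), hG.s_unit _⟩
  comp p q hpq :=
    ⟨(G.comp p.val.1 q.val.1
        (p.property.trans ((congrArg r.J hpq).trans (hr.J_act _ _ _))), q.val.2),
      (hG.s_comp _ _ _).trans q.property⟩
  inv p :=
    ⟨(G.inv p.val.1, r.act p.val.1 p.val.2 p.property),
      (hG.s_inv _).trans (hr.J_act _ _ _).symm⟩

/-- The canonical projection homomorphism from the transformation groupoid
`Γ ⋉ X ⇉ X` to `Γ ⇉ M` (denoted `J` in the paper). -/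
def proj (r : ActionOn G X) (hG : GrpdLaws G) (hr : ActionLaws r) :
    GrpdHom (r.trans hG hr) G where
  fo := r.J
  fa p := p.val.1
  map_s p := p.property
  map_t p := (hr.J_act _ _ _).symm
  map_unit _ := rfl
  map_comp _ _ _ _ := rfl

end ActionOn

/-- The transformation groupoid of a lawful action of a lawful groupoid is a
lawful groupoid. -/
theorem transLaws {O A X : Type} {G : GrpdOn O A} (hG : GrpdLaws G)
    {r : ActionOn G X} (hr : ActionLaws r) : GrpdLaws (r.trans hG hr) := by
  constructor
  · intro m; rfl
  · intro m; exact hr.act_unit m _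
  · intro g h hgh; rfl
  · intro g h hgh
    obtain ⟨⟨a, y⟩, hy⟩ := g
    obtain ⟨⟨b, x⟩, hx⟩ := h
    show r.act (G.comp a b _) x _ = r.act a y hy
    have hgh' : y = r.act b x hx := hgh
    subst hgh'
    exact hr.act_comp a b x hx _ _ _
  · intro g; rfl
  · intro g
    obtain ⟨⟨a, x⟩, hx⟩ := g
    show r.act (G.inv a) (r.act a x hx) _ = x
    have h3 : G.s (G.comp (G.inv a) a (hG.s_inv a)) = r.J x :=
      (hG.s_comp _ _ _).trans hx
    refine Eq.trans (hr.act_comp (G.inv a) a x hx (hG.s_inv a) h3 _).symm ?_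
    refine Eq.trans (r.act_congr
      ((hG.inv_comp a (hG.s_inv a)).trans (congrArg G.unit hx)) x h3
      ((hG.s_unit _))) ?_
    exact hr.act_unit x _
  · intro g m hm h
    obtain ⟨⟨a, x⟩, hx⟩ := g
    have hm' : x = m := hm
    subst hm'
    exact Subtype.ext (Prod.ext (hG.comp_unit a (r.J x) hx _) rfl)
  · intro g m hm h
    obtain ⟨⟨a, x⟩, hx⟩ := g
    have hm' : r.act a x hx = m := hm
    subst hm'
    refine Subtype.ext (Prod.ext ?_ rfl)
    exact hG.unit_comp a (r.J (r.act a x hx)) ((hr.J_act a x hx).symm) _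
  · intro g h
    obtain ⟨⟨a, x⟩, hx⟩ := g
    refine Subtype.ext (Prod.ext ?_ rfl)
    exact (hG.comp_inv a _).trans (congrArg G.unit (hr.J_act a x hx).symm)
  · intro g h
    obtain ⟨⟨a, x⟩, hx⟩ := g
    refine Subtype.ext (Prod.ext ?_ rfl)
    exact (hG.inv_comp a _).trans (congrArg G.unit hx)
  · intro g h k hgh hhk h1 h2
    exact Subtype.ext (Prod.ext (hG.assoc _ _ _ _ _ _ _) rfl)

variable {C}

/-- The isotropy condition on the graph of an action: the pull-back of the
2-form `(w, w_X, -w_X)` on `Γ × X × X̄` to the graph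
`Λ = {(g, x, g·x)}` vanishes. -/
def IsotropicGraph {O A X : Type} {G : GrpdOn O A} (w : C.Form A 2)
    (r : ActionOn G X) (wX : C.Form X 2) : Prop :=
  C.pull (fun p : r.Mor => p.val.1) w + C.pull (fun p : r.Mor => p.val.2) wX
    - C.pull (fun p : r.Mor => r.act p.val.1 p.val.2 p.property) wX = 0

variable (C)

/-- A pre-Hamiltonian `Γ`-space of the pre-quasi-symplectic groupoid
`(Γ ⇉ M, w + W)`: a left `Γ`-space `J : X → M` with a 2-form
`w_X ∈ Ω²(X)` such that `d w_X = J^* W` and the graph of the action is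
isotropic with respect to `(w, w_X, -w_X)`. -/
structure PreHamOn {O A : Type} {G : GrpdOn O A} (P : PQS C G) (X : Type) where
  ρ : ActionOn G X
  laws : ActionLaws ρ
  wX : C.Form X 2
  dwX : C.d wX = C.pull ρ.J P.W
  isotropic : IsotropicGraph P.w ρ wX

/-- Isomorphism of pre-Hamiltonian `Γ`-spaces: an equivariant diffeomorphism
commuting with the momentum maps and matching the 2-forms. -/
def PreHamIso {O A X X' : Type} {G : GrpdOn O A} {P : PQS C G}
    (H1 : PreHamOn C P X) (H2 : PreHamOn C P X') : Prop :=
  ∃ e : X ≃ X',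
    (∀ x, H2.ρ.J (e x) = H1.ρ.J x) ∧
    (∀ g x h h', e (H1.ρ.act g x h) = H2.ρ.act g (e x) h') ∧
    C.pull (⇑e) H2.wX = H1.wX

/-- The integrality condition (Definition 5.2 of the paper) for the pair
`(w_X, w + W)`: for every total 2-cycle `C` of the transformation groupoid
`Γ ⋉ X ⇉ X` and every total 3-chain `D` on `Γ_•` with `δD = J_*(C)`, the
number `∫_C w_X - ∫_D (w + W)` is an integer. -/
def IntegralityCondition {O A X : Type} (G : GrpdOn O A) (hG : GrpdLaws G)
    (w : C.Form A 2) (W : C.Form O 3) (r : ActionOn G X) (hr : ActionLaws r)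
    (wX : C.Form X 2) : Prop :=
  ∀ (Cc : Chn2 C (r.trans hG hr)) (D : Chn3 C G),
    deltaC21 C (r.trans hG hr) Cc = 0 →
    pushChn2 C (r.proj hG hr) Cc = deltaC32 C hG D →
    ∃ n : ℤ,
      pair2 C (r.trans hG hr) Cc (wX, 0, 0) - pair3 C G D (W, w, 0, 0) = (n : ℝ)

/-! ## S¹-central extensions -/

/-- An `S¹`-central extension `R → Γ ⇉ M` of the groupoid `Γ ⇉ M`:
a groupoid `R ⇉ M` over the same objects, a projection `π` which is a
morphism of groupoids fixing the objects, a principal `S¹`-action on `R`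
along the fibres of `π`, compatible with the groupoid structure in the
central way `(z·x)(v·y) = (zv)·(xy)`. -/
structure CentExt {O A : Type} (G : GrpdOn O A) (R : Type) where
  RG : GrpdOn O R
  π : R → A
  π_surj : Function.Surjective π
  π_s : ∀ r, G.s (π r) = RG.s r
  π_t : ∀ r, G.t (π r) = RG.t r
  π_unit : ∀ m, π (RG.unit m) = G.unit m
  π_comp : ∀ r r' h h', π (RG.comp r r' h) = G.comp (π r) (π r') h'
  smul : Circle → R → R
  one_smul : ∀ r, smul 1 r = r
  mul_smul : ∀ z v r, smul (z * v) r = smul z (smul v r)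
  π_smul : ∀ z r, π (smul z r) = π r
  s_smul : ∀ z r, RG.s (smul z r) = RG.s r
  t_smul : ∀ z r, RG.t (smul z r) = RG.t r
  free : ∀ z r, smul z r = r → z = 1
  fib_trans : ∀ r r', π r = π r' → ∃ z, smul z r = r'
  central : ∀ z v r r' h h',
    RG.comp (smul z r) (smul v r') h = smul (z * v) (RG.comp r r' h')

namespace CentExt

variable {O A R : Type} {G : GrpdOn O A}

/-- The projection of a central extension as a groupoid homomorphism. -/
def πHom (E : CentExt G R) : GrpdHom E.RG G where
  fo := fun m => m
  fa := E.π
  map_s := E.π_s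
  map_t := E.π_t
  map_unit := E.π_unit
  map_comp := E.π_comp

/-- The map `f_m : S¹ → R`, `λ ↦ λ · 1_m`. -/
def fib (E : CentExt G R) (m : O) : Circle → R := fun z => E.smul z (E.RG.unit m)

/-- The total 2-chain `Z_m = (f_m)_* C_{S¹}` of the groupoid `R_•`. -/
def Zm (E : CentExt G R) (m : O) : Chn2 C E.RG :=
  (0, C.push (E.fib m) C.circleCycle, 0)

/-- The total 2-chain `Z_r = (f_r)_* C_{S¹} - C_r`, where `f_r(λ) = λ·r` and
`C_r` is the constant loop at `r`. -/
def Zr (E : CentExt G R) (r : R) : Chn2 C E.RG :=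
  (0, C.push (fun z => E.smul z r) C.circleCycle
      - C.push (fun _ : Circle => r) C.circleCycle, 0)

/-- The action of `R ⇉ M` on a `Γ`-space `J : X → M` obtained through `π`. -/
def pullAct (E : CentExt G R) {X : Type} (r : ActionOn G X) :
    ActionOn E.RG X where
  J := r.J
  act q x h := r.act (E.π q) x ((E.π_s q).trans h)

theorem pullActLaws (E : CentExt G R) {X : Type} (r : ActionOn G X)
    (hr : ActionLaws r) : ActionLaws (E.pullAct r) := by
  constructor
  · intro q x h
    exact (hr.J_act _ _ _).trans (E.π_t q)
  · intro x h
    have h0 : G.s (E.π (E.RG.unit (r.J x))) = r.J x := (E.π_s _).trans h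
    exact (r.act_congr (E.π_unit (r.J x)) x h0
      (((congrArg G.s (E.π_unit (r.J x))).symm).trans h0)).trans
      (hr.act_unit x _)
  · intro q q' x hhx hqq' h1 h2
    have hπ : G.s (E.π q) = G.t (E.π q') :=
      (E.π_s q).trans (hqq'.trans (E.π_t q').symm)
    have h0 : G.s (E.π (E.RG.comp q q' hqq')) = r.J x := (E.π_s _).trans h1
    have h3 : G.s (G.comp (E.π q) (E.π q') hπ) = r.J x :=
      ((congrArg G.s (E.π_comp q q' hqq' hπ)).symm).trans h0
    exact (r.act_congr (E.π_comp q q' hqq' hπ) x h0 h3).trans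
      (hr.act_comp (E.π q) (E.π q') x ((E.π_s q').trans hhx) hπ h3
        ((E.π_s q).trans h2))

/-- The transformation groupoid `R ×_M X ⇉ X` of the pulled back action. -/
def pullTrans (E : CentExt G R) {X : Type} (r : ActionOn G X)
    (hR : GrpdLaws E.RG) (hr : ActionLaws r) : GrpdOn X (E.pullAct r).Mor :=
  (E.pullAct r).trans hR (E.pullActLaws r hr)

/-- The projection `J : R ×_M X → R` as a homomorphism of groupoids from
`R ×_M X ⇉ X` to `R ⇉ M`. -/
def JHom (E : CentExt G R) {X : Type} {r : ActionOn G X} (hR : GrpdLaws E.RG)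
    (hr : ActionLaws r) : GrpdHom (E.pullTrans r hR hr) E.RG where
  fo := r.J
  fa q := q.val.1
  map_s q := q.property
  map_t q := ((hr.J_act _ _ _).trans (E.π_t _)).symm
  map_unit _ := rfl
  map_comp _ _ _ _ := rfl

/-- The projection `π : R ×_M X → Γ ×_M X` as a homomorphism of the pulled
back central extension to the transformation groupoid `Γ ×_M X ⇉ X`. -/
def piXHom (E : CentExt G R) {X : Type} {r : ActionOn G X} (hG : GrpdLaws G)
    (hR : GrpdLaws E.RG) (hr : ActionLaws r) :
    GrpdHom (E.pullTrans r hR hr) (r.trans hG hr) where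
  fo := fun x => x
  fa q := ⟨(E.π q.val.1, q.val.2), (E.π_s _).trans q.property⟩
  map_s _ := rfl
  map_t _ := rfl
  map_unit _ := Subtype.ext (Prod.ext (E.π_unit _) rfl)
  map_comp _ _ _ _ := Subtype.ext (Prod.ext (E.π_comp _ _ _ _) rfl)

end CentExt

/-- The orbit relation of the groupoid `Γ ⇉ M` on its base. -/
def orbRel {O A : Type} (G : GrpdOn O A) : O → O → Prop :=
  fun m n => ∃ g : A, G.s g = m ∧ G.t g = n

/-- A connection-type 1-form for a principal `S¹`-action: its pull-back along
every orbit inclusion `S¹ → T`, `z ↦ z · x` is the normalized Maurer–Cartan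
form of `S¹`. -/
def IsConnForm {T : Type} (sm : Circle → T → T) (th : C.Form T 1) : Prop :=
  ∀ x : T, C.pull (fun z : Circle => sm z x) th = C.circleForm

/-! ## Principal S¹-bundles over a central extension -/

/-- A (right, written here on the left) principal `S¹`-bundle `L → M` over the
groupoid `R ⇉ M`, where `R → Γ ⇉ M` is an `S¹`-central extension.
The field `act_integral` is the surrogate, in this abstract setting, of the
smoothness of the action: for every `m` the induced homomorphism
`S¹ → S¹` is of the form `z ↦ z^k`. -/
structure GrpdS1Bundle {O A R : Type} {G : GrpdOn O A} (E : CentExt G R)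
    (L : Type) where
  p : L → O
  p_surj : Function.Surjective p
  bsmul : Circle → L → L
  bsmul_one : ∀ l, bsmul 1 l = l
  bsmul_mul : ∀ z v l, bsmul (z * v) l = bsmul z (bsmul v l)
  p_bsmul : ∀ z l, p (bsmul z l) = p l
  bfree : ∀ z l, bsmul z l = l → z = 1
  bfib_trans : ∀ l l', p l = p l' → ∃ z, bsmul z l = l'
  ract : ∀ (q : R) (l : L), E.RG.s q = p l → L
  p_ract : ∀ q l h, p (ract q l h) = E.RG.t q
  ract_unit : ∀ l h, ract (E.RG.unit (p l)) l h = l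
  ract_comp : ∀ q q' l hqq' h1 h2 h3,
    ract (E.RG.comp q q' hqq') l h1 = ract q (ract q' l h2) h3
  ract_bsmul : ∀ z q l h h', ract q (bsmul z l) h = bsmul z (ract q l h')
  act_integral : ∀ m : O, ∃ k : ℤ, ∀ (z : Circle) (l : L)
    (h : E.RG.s (E.smul z (E.RG.unit m)) = p l),
    ract (E.smul z (E.RG.unit m)) l h = bsmul (z ^ k) l

namespace GrpdS1Bundle

variable {O A R L : Type} {G : GrpdOn O A} {E : CentExt G R}

/-- The index `Ind_m(L)` of the bundle at `m`. -/
def ind (B : GrpdS1Bundle E L) (m : O) : ℤ := (B.act_integral m).choose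

/-- The fibre of the bundle at `m`. -/
def fiber (B : GrpdS1Bundle E L) (m : O) : Type := { l : L // B.p l = m }

/-- The underlying action of `R ⇉ M` on `L`. -/
def action (B : GrpdS1Bundle E L) : ActionOn E.RG L where
  J := B.p
  act := B.ract

theorem actionLaws (B : GrpdS1Bundle E L) : ActionLaws B.action :=
  ⟨B.p_ract, B.ract_unit,
    fun g h x hhx hgh h1 h2 => B.ract_comp g h x hgh h1 hhx h2⟩

/-- The bundle `L → M` is a `(Γ, R)`-twisted line bundle when the kernel
`ker π ≅ M × S¹` acts by scalar multiplication. -/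
def IsTwisted (B : GrpdS1Bundle E L) : Prop :=
  ∀ (m : O) (z : Circle) (l : L) (h : E.RG.s (E.smul z (E.RG.unit m)) = B.p l),
    B.ract (E.smul z (E.RG.unit m)) l h = B.bsmul z l

end GrpdS1Bundle

/-! ## Prequantizations -/

/-- A prequantization of a pre-quasi-symplectic groupoid `(Γ ⇉ M, w + W)`:
an `S¹`-central extension `R → Γ ⇉ M` together with a pseudo-connection
`θ + B ∈ Ω¹(R) ⊕ Ω²(M)` (with `θ` a connection 1-form for `R → Γ`) such that
`δ(θ + B) = π^*(w + W)`. -/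
structure Preq {O A : Type} {G : GrpdOn O A} (P : PQS C G) {R : Type}
    (E : CentExt G R) (hR : GrpdLaws E.RG) where
  θ : C.Form R 1
  B : C.Form O 2
  conn : IsConnForm C E.smul θ
  curv : delta23 C hR ((B, θ, 0) : Coch2 C E.RG)
    = pullCoch3 C E.πHom ((P.W, P.w, 0, 0) : Coch3 C G)

/-- A compatible prequantization of a pre-Hamiltonian `Γ`-space `(X, w_X)`
(Definition 4.2 of the paper): an `S¹`-bundle `φ : L → X` with connection
1-form `θ_L`, an `R`-action on `L` covering the `Γ`-action on `X`, such that
the combined action is `S¹`-bi-equivariant, `(θ, θ_L, -θ_L)` vanishes on the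
graph of the action, and `dθ_L = φ^*(J^* B - w_X)`. -/
structure CompatPreq {O A R X : Type} {G : GrpdOn O A} {P : PQS C G}
    {E : CentExt G R} {hR : GrpdLaws E.RG} (Q : Preq C P E hR)
    (H : PreHamOn C P X) (L : Type) where
  φ : L → X
  φ_surj : Function.Surjective φ
  lsmul : Circle → L → L
  lsmul_one : ∀ l, lsmul 1 l = l
  lsmul_mul : ∀ z v l, lsmul (z * v) l = lsmul z (lsmul v l)
  φ_lsmul : ∀ z l, φ (lsmul z l) = φ l
  lfree : ∀ z l, lsmul z l = l → z = 1
  lfib_trans : ∀ l l', φ l = φ l' → ∃ z, lsmul z l = l'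
  lact : ∀ (q : R) (l : L), E.RG.s q = H.ρ.J (φ l) → L
  φ_lact : ∀ q l h h', φ (lact q l h) = H.ρ.act (E.π q) (φ l) h'
  lact_unit : ∀ l h, lact (E.RG.unit (H.ρ.J (φ l))) l h = l
  lact_comp : ∀ q q' l hqq' h1 h2 h3,
    lact (E.RG.comp q q' hqq') l h1 = lact q (lact q' l h2) h3
  lact_lsmul : ∀ z v q l h h',
    lact (E.smul z q) (lsmul v l) h = lsmul (z * v) (lact q l h')
  θL : C.Form L 1
  connL : IsConnForm C lsmul θL
  graph :
    C.pull (fun p : { q : R × L // E.RG.s q.1 = H.ρ.J (φ q.2) } => p.val.1) Q.θ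
      + C.pull (fun p : { q : R × L // E.RG.s q.1 = H.ρ.J (φ q.2) } => p.val.2) θL
      - C.pull
          (fun p : { q : R × L // E.RG.s q.1 = H.ρ.J (φ q.2) } =>
            lact p.val.1 p.val.2 p.property) θL
      = 0
  dθL : C.d θL = C.pull φ (C.pull H.ρ.J Q.B - H.wX)

/-- Isomorphism of compatible prequantizations. -/
def CompatPreqIso {O A R X : Type} {G : GrpdOn O A} {P : PQS C G}
    {E : CentExt G R} {hR : GrpdLaws E.RG} {Q : Preq C P E hR}
    {H : PreHamOn C P X} {L1 L2 : Type} (c1 : CompatPreq C Q H L1)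
    (c2 : CompatPreq C Q H L2) : Prop :=
  ∃ e : L1 ≃ L2,
    (∀ l, c2.φ (e l) = c1.φ l) ∧
    (∀ z l, e (c1.lsmul z l) = c2.lsmul z (e l)) ∧
    (∀ q l h h', e (c1.lact q l h) = c2.lact q (e l) h') ∧
    C.pull (⇑e) c2.θL = c1.θL

/-! ## Quotient manifolds -/

/-- The data of a smooth quotient manifold `Γ \ Y` of a groupoid action:
a surjection whose fibres are exactly the orbits, along which forms with
`∂α = 0` (w.r.t. the transformation groupoid) descend, uniquely. -/
structure QuotientManifold {O A Y : Type} {G : GrpdOn O A} (r : ActionOn G Y)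
    (Qt : Type) where
  pr : Y → Qt
  surj : Function.Surjective pr
  invariant : ∀ g y h, pr (r.act g y h) = pr y
  fibers : ∀ y y', pr y = pr y' → ∃ g h, r.act g y h = y'
  descend : ∀ (k : ℕ) (a : C.Form Y k),
    C.pull (fun p : r.Mor => p.val.2) a
      = C.pull (fun p : r.Mor => r.act p.val.1 p.val.2 p.property) a →
    ∃ b : C.Form Qt k, C.pull pr b = a
  pull_inj : ∀ (k : ℕ) (b b' : C.Form Qt k), C.pull pr b = C.pull pr b' → b = b'

/-- The diagonal action of `Γ` on `X̄₂ ×_M X₁` for two pre-Hamiltonian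
`Γ`-spaces. -/
def diagPreHamAction {O A X1 X2 : Type} {G : GrpdOn O A} {P : PQS C G}
    (H2 : PreHamOn C P X2) (H1 : PreHamOn C P X1) :
    ActionOn G { q : X2 × X1 // H2.ρ.J q.1 = H1.ρ.J q.2 } where
  J q := H1.ρ.J q.val.2
  act g q h :=
    ⟨(H2.ρ.act g q.val.1 (h.trans q.property.symm), H1.ρ.act g q.val.2 h),
      (H2.laws.J_act _ _ _).trans (H1.laws.J_act _ _ _).symm⟩

theorem diagPreHamActionLaws {O A X1 X2 : Type} {G : GrpdOn O A} {P : PQS C G}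
    (H2 : PreHamOn C P X2) (H1 : PreHamOn C P X1) :
    ActionLaws (diagPreHamAction C H2 H1) := by
  constructor
  · intro g q h
    exact H1.laws.J_act g q.val.2 h
  · intro q h
    obtain ⟨⟨x2, x1⟩, hq⟩ := q
    refine Subtype.ext (Prod.ext ?_ (H1.laws.act_unit x1 h))
    have e : G.unit (H1.ρ.J x1) = G.unit (H2.ρ.J x2) := congrArg G.unit hq.symm
    refine (H2.ρ.act_congr e x2 _ ?_).trans (H2.laws.act_unit x2 _)
    exact (congrArg G.s e).symm.trans (h.trans hq.symm)
  · intro g h x hhx hgh h1 h2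
    refine Subtype.ext (Prod.ext ?_ ?_)
    · exact H2.laws.act_comp g h x.val.1 _ hgh _ _
    · exact H1.laws.act_comp g h x.val.2 hhx hgh _ _


/-! ## Bundle actions of the pulled-back groupoid (for Proposition 5.4) -/

/-- Given an `S¹`-bundle `φ : L → X` over a pre-Hamiltonian space with an
`R`-action `lact`, the induced action of the transformation groupoid
`R ×_M X ⇉ X` on `L`. -/
def bundleAction {O A R X L : Type} {G : GrpdOn O A} (E : CentExt G R)
    (r : ActionOn G X) (hR : GrpdLaws E.RG) (hr : ActionLaws r) (φ : L → X)
    (lact : ∀ (q : R) (l : L), E.RG.s q = r.J (φ l) → L) :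
    ActionOn (E.pullTrans r hR hr) L where
  J := φ
  act q l h := lact q.val.1 l (q.property.trans (congrArg r.J h))

theorem bundleActionLaws {O A R X L : Type} {G : GrpdOn O A} (E : CentExt G R)
    (r : ActionOn G X) (hR : GrpdLaws E.RG) (hr : ActionLaws r) (φ : L → X)
    (lact : ∀ (q : R) (l : L), E.RG.s q = r.J (φ l) → L)
    (hφl : ∀ q l h h', φ (lact q l h) = r.act (E.π q) (φ l) h')
    (hunit : ∀ l h, lact (E.RG.unit (r.J (φ l))) l h = l)
    (hcomp : ∀ q q' l hqq' h1 h2 h3,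
      lact (E.RG.comp q q' hqq') l h1 = lact q (lact q' l h2) h3) :
    ActionLaws (bundleAction E r hR hr φ lact) := by
  constructor
  · intro q l h
    obtain ⟨⟨a, x⟩, hax⟩ := q
    have hx : x = φ l := h
    subst hx
    exact hφl a l _ _
  · intro l h
    exact hunit l _
  · intro q q' l hhx hgh h1 h2
    exact hcomp q.val.1 q'.val.1 l _ _ _ _

/-! ## Diagonal actions on products of prequantization bundles -/

/-- The diagonal action of `R ⇉ M` on `L₂ ×_M L₁` for two compatible
prequantizations of pre-Hamiltonian `Γ`-spaces. -/
def diagPreqAction {O A R X1 X2 L1 L2 : Type} {G : GrpdOn O A} {P : PQS C G}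
    {E : CentExt G R} {hR : GrpdLaws E.RG} {Q : Preq C P E hR}
    {H2 : PreHamOn C P X2} {H1 : PreHamOn C P X1}
    (c2 : CompatPreq C Q H2 L2) (c1 : CompatPreq C Q H1 L1) :
    ActionOn E.RG { y : L2 × L1 // H2.ρ.J (c2.φ y.1) = H1.ρ.J (c1.φ y.2) } where
  J y := H1.ρ.J (c1.φ y.val.2)
  act q y h :=
    ⟨(c2.lact q y.val.1 (h.trans y.property.symm), c1.lact q y.val.2 h),
      (((congrArg H2.ρ.J
            (c2.φ_lact q y.val.1 (h.trans y.property.symm)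
              ((E.π_s q).trans (h.trans y.property.symm)))).trans
          (H2.laws.J_act _ _ _)).trans
        (((congrArg H1.ρ.J (c1.φ_lact q y.val.2 h ((E.π_s q).trans h))).trans
            (H1.laws.J_act _ _ _)).symm))⟩

theorem diagPreqActionLaws {O A R X1 X2 L1 L2 : Type} {G : GrpdOn O A}
    {P : PQS C G} {E : CentExt G R} {hR : GrpdLaws E.RG} {Q : Preq C P E hR}
    {H2 : PreHamOn C P X2} {H1 : PreHamOn C P X1}
    (c2 : CompatPreq C Q H2 L2) (c1 : CompatPreq C Q H1 L1) :
    ActionLaws (diagPreqAction C c2 c1) := by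
  have key : ∀ (y1 : L2) (u u' : R) (hu : u = u')
      (hl : E.RG.s u = H2.ρ.J (c2.φ y1)) (hl' : E.RG.s u' = H2.ρ.J (c2.φ y1)),
      c2.lact u y1 hl = c2.lact u' y1 hl' := by
    intro y1 u u' hu hl hl'; subst hu; rfl
  constructor
  · intro q y h
    exact (congrArg H1.ρ.J
      (c1.φ_lact q y.val.2 h ((E.π_s q).trans h))).trans
      ((H1.laws.J_act _ _ _).trans (E.π_t q))
  · intro y h
    obtain ⟨⟨y2, y1⟩, hy⟩ := y
    refine Subtype.ext (Prod.ext ?_ (c1.lact_unit y1 h))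
    refine (key y2 _ _ (congrArg E.RG.unit hy.symm) _ ?_).trans
      (c2.lact_unit y2 _)
    exact (congrArg E.RG.s (congrArg E.RG.unit hy.symm)).symm.trans
      (h.trans hy.symm)
  · intro q q' y hhx hgh h1 h2
    refine Subtype.ext (Prod.ext ?_ ?_)
    · exact c2.lact_comp q q' y.val.1 hgh _ _ _
    · exact c1.lact_comp q q' y.val.2 hgh _ _ _

/-! ## Morita equivalence -/

/-- A Morita equivalence bimodule between two pre-quasi-symplectic groupoids
`(G ⇉ G₀, w_G + W_G)` and `(H ⇉ H₀, w_H + W_H)`: a biprincipal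
`(G, H)`-bibundle `G₀ ← X → H₀` equipped with a 2-form `w_X` making `X` a
pre-Hamiltonian `G × H̄`-space for the action `(g, h)·x = g x h⁻¹`. -/
structure MoritaBimodule {O1 A1 O2 A2 : Type} {G : GrpdOn O1 A1}
    {Hg : GrpdOn O2 A2} (PG : PQS C G) (PH : PQS C Hg) (Xb : Type) where
  ρl : ActionOn G Xb
  lawsl : ActionLaws ρl
  σ : Xb → O2
  ractH : ∀ (h : A2) (x : Xb), Hg.t h = σ x → Xb
  σ_ract : ∀ h x hh, σ (ractH h x hh) = Hg.s h
  J_ract : ∀ h x hh, ρl.J (ractH h x hh) = ρl.J x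
  σ_actl : ∀ g x hg, σ (ρl.act g x hg) = σ x
  ract_unit : ∀ x h, ractH (Hg.unit (σ x)) x h = x
  ract_comp : ∀ h h' x hhh' h1 h2 h3,
    ractH (Hg.comp h h' hhh') x h1 = ractH h' (ractH h x h2) h3
  actComm : ∀ (g : A1) (h : A2) (x : Xb) (hh : Hg.t h = σ x)
    (hg : G.s g = ρl.J (ractH h x hh)) (hg' : G.s g = ρl.J x)
    (hh' : Hg.t h = σ (ρl.act g x hg')),
    ρl.act g (ractH h x hh) hg = ractH h (ρl.act g x hg') hh'
  freeG : ∀ g x hg, ρl.act g x hg = x → g = G.unit (ρl.J x)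
  transG : ∀ x y, σ x = σ y → ∃ g hg, ρl.act g x hg = y
  freeH : ∀ h x hh, ractH h x hh = x → h = Hg.unit (σ x)
  transH : ∀ x y, ρl.J x = ρl.J y → ∃ h hh, ractH h x hh = y
  J_surj : Function.Surjective ρl.J
  σ_surj : Function.Surjective σ
  wXb : C.Form Xb 2
  dwXb : C.d wXb = C.pull ρl.J PG.W - C.pull σ PH.W
  isotropic :
    C.pull (fun q : { u : A1 × A2 × Xb //
        G.s u.1 = ρl.J u.2.2 ∧ Hg.t u.2.1 = σ u.2.2 } => q.val.1) PG.w
      - C.pull (fun q : { u : A1 × A2 × Xb //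
          G.s u.1 = ρl.J u.2.2 ∧ Hg.t u.2.1 = σ u.2.2 } => q.val.2.1) PH.w
      + C.pull (fun q : { u : A1 × A2 × Xb //
          G.s u.1 = ρl.J u.2.2 ∧ Hg.t u.2.1 = σ u.2.2 } => q.val.2.2) wXb
      - C.pull (fun q : { u : A1 × A2 × Xb //
          G.s u.1 = ρl.J u.2.2 ∧ Hg.t u.2.1 = σ u.2.2 } =>
            ρl.act q.val.1 (ractH q.val.2.1 q.val.2.2 q.property.2)
              (q.property.1.trans (J_ract _ _ _).symm)) wXb
      = 0

/-- `F` (a pre-Hamiltonian `G`-space) and `E` (a pre-Hamiltonian `H`-space)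
are a pair of related pre-Hamiltonian spaces via the explicit map
`Φ : X ×_{G₀} F → E` which realizes `E` as `X̄ ×_G F`. -/
def RelatedVia {O1 A1 O2 A2 Xb Xf Xe : Type} {G : GrpdOn O1 A1}
    {Hg : GrpdOn O2 A2} {PG : PQS C G} {PH : PQS C Hg}
    (M : MoritaBimodule C PG PH Xb) (F : PreHamOn C PG Xf)
    (Eh : PreHamOn C PH Xe)
    (Φ : { q : Xb × Xf // M.ρl.J q.1 = F.ρ.J q.2 } → Xe) : Prop :=
  Function.Surjective Φ ∧
  (∀ q, Eh.ρ.J (Φ q) = M.σ q.val.1) ∧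
  (∀ (g : A1) (q : { q : Xb × Xf // M.ρl.J q.1 = F.ρ.J q.2 })
      (hg : G.s g = M.ρl.J q.val.1),
    Φ ⟨(M.ρl.act g q.val.1 hg, F.ρ.act g q.val.2 (hg.trans q.property)),
        (M.lawsl.J_act _ _ _).trans (F.laws.J_act _ _ _).symm⟩ = Φ q) ∧
  (∀ q q', Φ q = Φ q' →
    ∃ (g : A1) (hg : G.s g = M.ρl.J q.val.1) (hf : G.s g = F.ρ.J q.val.2),
      q'.val.1 = M.ρl.act g q.val.1 hg ∧ q'.val.2 = F.ρ.act g q.val.2 hf) ∧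
  (∀ (h : A2) (q : { q : Xb × Xf // M.ρl.J q.1 = F.ρ.J q.2 })
      (hh : Hg.t h = M.σ q.val.1)
      (he : Hg.s (Hg.inv h) = Eh.ρ.J (Φ q)),
    Φ ⟨(M.ractH h q.val.1 hh, q.val.2), (M.J_ract _ _ _).trans q.property⟩
      = Eh.ρ.act (Hg.inv h) (Φ q) he) ∧
  C.pull Φ Eh.wX
    = -C.pull (fun q : { q : Xb × Xf // M.ρl.J q.1 = F.ρ.J q.2 } => q.val.1)
          M.wXb
      + C.pull (fun q : { q : Xb × Xf // M.ρl.J q.1 = F.ρ.J q.2 } => q.val.2)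
          F.wX

/-- Morita equivalence of prequantizations: a compatible prequantization
`(Z → X, θ_Z)` of the equivalence bimodule `X` with respect to the
prequantization `((R_G × R̄_H)/S¹ → G × H̄ ⇉ G₀ × H̄₀,
(θ_G ⊖ θ_H) + (B_G ⊖ B_H))` of the product, written out explicitly:
commuting `R_G`- and `R_H`-actions on `Z` covering the bimodule actions,
`S¹`-(anti)equivariantly, with the graph and curvature conditions. -/
structure MoritaPreqData {O1 A1 R1 O2 A2 R2 Xb : Type} {G : GrpdOn O1 A1}
    {Hg : GrpdOn O2 A2} {PG : PQS C G} {PH : PQS C Hg}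
    {EG : CentExt G R1} {hRG : GrpdLaws EG.RG}
    {EH : CentExt Hg R2} {hRH : GrpdLaws EH.RG}
    (QG : Preq C PG EG hRG) (QH : Preq C PH EH hRH)
    (M : MoritaBimodule C PG PH Xb) (Z : Type) where
  pz : Z → Xb
  pz_surj : Function.Surjective pz
  zsmul : Circle → Z → Z
  zsmul_one : ∀ z, zsmul 1 z = z
  zsmul_mul : ∀ u v z, zsmul (u * v) z = zsmul u (zsmul v z)
  pz_zsmul : ∀ u z, pz (zsmul u z) = pz z
  zfree : ∀ u z, zsmul u z = z → u = 1
  zfib_trans : ∀ z z', pz z = pz z' → ∃ u, zsmul u z = z'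
  actG : ∀ (q : R1) (z : Z), EG.RG.s q = M.ρl.J (pz z) → Z
  pz_actG : ∀ q z h h', pz (actG q z h) = M.ρl.act (EG.π q) (pz z) h'
  actG_unit : ∀ z h, actG (EG.RG.unit (M.ρl.J (pz z))) z h = z
  actG_comp : ∀ q q' z hqq' h1 h2 h3,
    actG (EG.RG.comp q q' hqq') z h1 = actG q (actG q' z h2) h3
  actG_zsmul : ∀ u v q z h h',
    actG (EG.smul u q) (zsmul v z) h = zsmul (u * v) (actG q z h')
  actH : ∀ (q : R2) (z : Z), EH.RG.t q = M.σ (pz z) → Z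
  pz_actH : ∀ q z h h', pz (actH q z h) = M.ractH (EH.π q) (pz z) h'
  actH_unit : ∀ z h, actH (EH.RG.unit (M.σ (pz z))) z h = z
  actH_comp : ∀ q q' z hqq' h1 h2 h3,
    actH (EH.RG.comp q q' hqq') z h1 = actH q' (actH q z h2) h3
  actH_zsmul : ∀ u v q z h h',
    actH (EH.smul u q) (zsmul v z) h = zsmul (u⁻¹ * v) (actH q z h')
  actGH_comm : ∀ (q1 : R1) (q2 : R2) (z : Z) (hh : EH.RG.t q2 = M.σ (pz z))
    (hg : EG.RG.s q1 = M.ρl.J (pz (actH q2 z hh)))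
    (hg' : EG.RG.s q1 = M.ρl.J (pz z))
    (hh' : EH.RG.t q2 = M.σ (pz (actG q1 z hg'))),
    actG q1 (actH q2 z hh) hg = actH q2 (actG q1 z hg') hh'
  θZ : C.Form Z 1
  connZ : IsConnForm C zsmul θZ
  graphZ :
    C.pull (fun q : { u : R1 × R2 × Z // EG.RG.s u.1 = M.ρl.J (pz u.2.2)
        ∧ EH.RG.t u.2.1 = M.σ (pz u.2.2) } => q.val.1) QG.θ
      - C.pull (fun q : { u : R1 × R2 × Z // EG.RG.s u.1 = M.ρl.J (pz u.2.2)
          ∧ EH.RG.t u.2.1 = M.σ (pz u.2.2) } => q.val.2.1) QH.θ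
      + C.pull (fun q : { u : R1 × R2 × Z // EG.RG.s u.1 = M.ρl.J (pz u.2.2)
          ∧ EH.RG.t u.2.1 = M.σ (pz u.2.2) } => q.val.2.2) θZ
      - C.pull (fun q : { u : R1 × R2 × Z // EG.RG.s u.1 = M.ρl.J (pz u.2.2)
          ∧ EH.RG.t u.2.1 = M.σ (pz u.2.2) } =>
            actG q.val.1 (actH q.val.2.1 q.val.2.2 q.property.2)
              (q.property.1.trans
                (((congrArg M.ρl.J
                      (pz_actH q.val.2.1 q.val.2.2 q.property.2
                        ((EH.π_t _).trans q.property.2))).trans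
                    (M.J_ract _ _ _)).symm))) θZ
      = 0
  dθZ : C.d θZ
    = C.pull pz (C.pull M.ρl.J QG.B - C.pull M.σ QH.B - M.wXb)

/-- The diagonal action of `R_G` on `Z ×_{G₀} L` used in the construction of
the prequantization `L' = Z ×_{R_G} L̄` of the related Hamiltonian space. -/
def diagMoritaAction {O1 A1 R1 O2 A2 R2 Xb Xf Lf : Type} {G : GrpdOn O1 A1}
    {Hg : GrpdOn O2 A2} {PG : PQS C G} {PH : PQS C Hg}
    {EG : CentExt G R1} {hRG : GrpdLaws EG.RG}
    {EH : CentExt Hg R2} {hRH : GrpdLaws EH.RG}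
    {QG : Preq C PG EG hRG} {QH : Preq C PH EH hRH}
    {M : MoritaBimodule C PG PH Xb} {Z : Type} {F : PreHamOn C PG Xf}
    (MZ : MoritaPreqData C QG QH M Z) (cF : CompatPreq C QG F Lf) :
    ActionOn EG.RG { y : Z × Lf // M.ρl.J (MZ.pz y.1) = F.ρ.J (cF.φ y.2) } where
  J y := M.ρl.J (MZ.pz y.val.1)
  act q y h :=
    ⟨(MZ.actG q y.val.1 h, cF.lact q y.val.2 (h.trans y.property)),
      (((congrArg M.ρl.J (MZ.pz_actG q y.val.1 h ((EG.π_s q).trans h))).trans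
          (M.lawsl.J_act _ _ _)).trans
        (((congrArg F.ρ.J
              (cF.φ_lact q y.val.2 (h.trans y.property)
                ((EG.π_s q).trans (h.trans y.property)))).trans
            (F.laws.J_act _ _ _)).symm))⟩

theorem diagMoritaActionLaws {O1 A1 R1 O2 A2 R2 Xb Xf Lf : Type}
    {G : GrpdOn O1 A1} {Hg : GrpdOn O2 A2} {PG : PQS C G} {PH : PQS C Hg}
    {EG : CentExt G R1} {hRG : GrpdLaws EG.RG}
    {EH : CentExt Hg R2} {hRH : GrpdLaws EH.RG}
    {QG : Preq C PG EG hRG} {QH : Preq C PH EH hRH}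
    {M : MoritaBimodule C PG PH Xb} {Z : Type} {F : PreHamOn C PG Xf}
    (MZ : MoritaPreqData C QG QH M Z) (cF : CompatPreq C QG F Lf) :
    ActionLaws (diagMoritaAction C MZ cF) := by
  have key : ∀ (l : Lf) (u u' : R1) (hu : u = u')
      (hl : EG.RG.s u = F.ρ.J (cF.φ l)) (hl' : EG.RG.s u' = F.ρ.J (cF.φ l)),
      cF.lact u l hl = cF.lact u' l hl' := by
    intro l u u' hu hl hl'; subst hu; rfl
  constructor
  · intro q y h
    exact (congrArg M.ρl.J
      (MZ.pz_actG q y.val.1 h ((EG.π_s q).trans h))).trans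
      ((M.lawsl.J_act _ _ _).trans (EG.π_t q))
  · intro y h
    obtain ⟨⟨z, l⟩, hy⟩ := y
    refine Subtype.ext (Prod.ext (MZ.actG_unit z h) ?_)
    refine (key l _ _ (congrArg EG.RG.unit hy) _ ?_).trans (cF.lact_unit l _)
    exact (congrArg EG.RG.s (congrArg EG.RG.unit hy)).symm.trans (h.trans hy)
  · intro q q' y hhx hgh h1 h2
    refine Subtype.ext (Prod.ext ?_ ?_)
    · exact MZ.actG_comp q q' y.val.1 hgh _ _ _
    · exact cF.lact_comp q q' y.val.2 hgh _ _ _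

/-! ## Concrete groupoids -/

/-- The transformation groupoid `G × G ⇉ G` of the conjugation action (the
underlying groupoid of the AMM quasi-symplectic groupoid). -/
def conjGrpd (𝔾 : Type) [Group 𝔾] : GrpdOn 𝔾 (𝔾 × 𝔾) where
  s p := p.2
  t p := p.1 * p.2 * p.1⁻¹
  unit x := (1, x)
  comp g h _ := (g.1 * h.1, h.2)
  inv g := (g.1⁻¹, g.1 * g.2 * g.1⁻¹)

theorem conjGrpdLaws (𝔾 : Type) [Group 𝔾] : GrpdLaws (conjGrpd 𝔾) := by
  constructor
  · intro m; rfl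
  · intro m; show 1 * m * 1⁻¹ = m; group
  · intro g h hgh; rfl
  · intro g h hgh
    show (g.1 * h.1) * h.2 * (g.1 * h.1)⁻¹ = g.1 * g.2 * g.1⁻¹
    have hg : g.2 = h.1 * h.2 * h.1⁻¹ := hgh
    rw [hg]; group
  · intro g; rfl
  · intro g
    show g.1⁻¹ * (g.1 * g.2 * g.1⁻¹) * g.1⁻¹⁻¹ = g.2
    group
  · intro g m hm h
    show (g.1 * 1, m) = g
    rw [mul_one]; exact Prod.ext rfl hm.symm
  · intro g m hm h
    show (1 * g.1, g.2) = g
    rw [one_mul]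
  · intro g h
    show (g.1 * g.1⁻¹, g.1 * g.2 * g.1⁻¹) = (1, g.1 * g.2 * g.1⁻¹)
    rw [mul_inv_cancel]
  · intro g h
    show (g.1⁻¹ * g.1, g.2) = (1, g.2)
    rw [inv_mul_cancel]
  · intro g h k hgh hhk h1 h2
    show (g.1 * h.1 * k.1, k.2) = (g.1 * (h.1 * k.1), k.2)
    rw [mul_assoc]

/-- The transformation groupoid `G × X ⇉ X` of a group action. -/
def mulActGrpd (𝔾 X : Type) [Group 𝔾] [MulAction 𝔾 X] : GrpdOn X (𝔾 × X) where
  s p := p.2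
  t p := p.1 • p.2
  unit x := (1, x)
  comp g h _ := (g.1 * h.1, h.2)
  inv g := (g.1⁻¹, g.1 • g.2)

theorem mulActGrpdLaws (𝔾 X : Type) [Group 𝔾] [MulAction 𝔾 X] :
    GrpdLaws (mulActGrpd 𝔾 X) := by
  constructor
  · intro m; rfl
  · intro m; exact one_smul _ _
  · intro g h hgh; rfl
  · intro g h hgh
    show (g.1 * h.1) • h.2 = g.1 • g.2
    have hg : g.2 = h.1 • h.2 := hgh
    rw [mul_smul, ← hg]
  · intro g; rfl
  · intro g; exact inv_smul_smul _ _
  · intro g m hm h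
    show (g.1 * 1, m) = g
    rw [mul_one]; exact Prod.ext rfl hm.symm
  · intro g m hm h
    show (1 * g.1, g.2) = g
    rw [one_mul]
  · intro g h
    show (g.1 * g.1⁻¹, g.1 • g.2) = (1, g.1 • g.2)
    rw [mul_inv_cancel]
  · intro g h
    show (g.1⁻¹ * g.1, g.2) = (1, g.2)
    rw [inv_mul_cancel]
  · intro g h k hgh hhk h1 h2
    show (g.1 * h.1 * k.1, k.2) = (g.1 * (h.1 * k.1), k.2)
    rw [mul_assoc]

/-- A group action on a space, as a groupoid action of `G × X ⇉ X`...
actually the action of the transformation groupoid `G × X ⇉ X` on a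
`G`-equivariant map `J : Y → X` is not needed; instead we need actions on
spaces over the base.  For the AMM groupoid and `T^*G ⇉ 𝔤^*` we use
`PreHamOn` directly. -/
def grpActionOn (𝔾 X Y : Type) [Group 𝔾] [MulAction 𝔾 X] [MulAction 𝔾 Y]
    (J : Y → X) (hJ : ∀ (g : 𝔾) (y : Y), J (g • y) = g • J y) :
    ActionOn (mulActGrpd 𝔾 X) Y where
  J := J
  act g y _ := g.1 • y

/-! ## Pull-back groupoids -/

/-- The pull-back groupoid `Γ[N] ⇉ N` of `Γ ⇉ M` along `p : N → M`. -/
def pbGrpd {O A N : Type} (G : GrpdOn O A) (hG : GrpdLaws G) (p : N → O) :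
    GrpdOn N { q : N × A × N // G.t q.2.1 = p q.1 ∧ G.s q.2.1 = p q.2.2 } where
  s q := q.val.2.2
  t q := q.val.1
  unit n := ⟨(n, G.unit (p n), n), ⟨hG.t_unit _, hG.s_unit _⟩⟩
  comp q q' h :=
    ⟨(q.val.1,
        G.comp q.val.2.1 q'.val.2.1
          (q.property.2.trans ((congrArg p h).trans q'.property.1.symm)),
        q'.val.2.2),
      ⟨(hG.t_comp _ _ _).trans q.property.1, (hG.s_comp _ _ _).trans q'.property.2⟩⟩
  inv q :=
    ⟨(q.val.2.2, G.inv q.val.2.1, q.val.1),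
      ⟨(hG.t_inv _).trans q.property.2, (hG.s_inv _).trans q.property.1⟩⟩

theorem pbGrpdLaws {O A N : Type} (G : GrpdOn O A) (hG : GrpdLaws G)
    (p : N → O) : GrpdLaws (pbGrpd G hG p) := by
  constructor
  · intro m; rfl
  · intro m; rfl
  · intro g h hgh; rfl
  · intro g h hgh; rfl
  · intro g; rfl
  · intro g; rfl
  · intro q m hm h
    obtain ⟨⟨n1, a, n2⟩, hq1, hq2⟩ := q
    have hm' : n2 = m := hm
    subst hm'
    exact Subtype.ext
      (Prod.ext rfl (Prod.ext (hG.comp_unit a (p n2) hq2 _) rfl))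
  · intro q m hm h
    obtain ⟨⟨n1, a, n2⟩, hq1, hq2⟩ := q
    have hm' : n1 = m := hm
    subst hm'
    exact Subtype.ext
      (Prod.ext rfl (Prod.ext (hG.unit_comp a (p n1) hq1 _) rfl))
  · intro q h
    obtain ⟨⟨n1, a, n2⟩, hq1, hq2⟩ := q
    exact Subtype.ext (Prod.ext rfl
      (Prod.ext ((hG.comp_inv a _).trans (congrArg G.unit hq1)) rfl))
  · intro q h
    obtain ⟨⟨n1, a, n2⟩, hq1, hq2⟩ := q
    exact Subtype.ext (Prod.ext rfl
      (Prod.ext ((hG.inv_comp a _).trans (congrArg G.unit hq2)) rfl))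
  · intro g h k hgh hhk h1 h2
    exact Subtype.ext
      (Prod.ext rfl (Prod.ext (hG.assoc _ _ _ _ _ _ _) rfl))

/-- The pull-back `X_N = X ×_M N` of a `Γ`-space along `p : N → M`, as a
`Γ[N]`-space. -/
def pbAct {O A N X : Type} {G : GrpdOn O A} (hG : GrpdLaws G) (p : N → O)
    (r : ActionOn G X) (hr : ActionLaws r) :
    ActionOn (pbGrpd G hG p) { q : X × N // r.J q.1 = p q.2 } where
  J q := q.val.2
  act a q h :=
    ⟨(r.act a.val.2.1 q.val.1
        (a.property.2.trans ((congrArg p h).trans q.property.symm)), a.val.1),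
      (hr.J_act _ _ _).trans a.property.1⟩

theorem pbActLaws {O A N X : Type} {G : GrpdOn O A} (hG : GrpdLaws G)
    (p : N → O) (r : ActionOn G X) (hr : ActionLaws r) :
    ActionLaws (pbAct hG p r hr) := by
  constructor
  · intro a q h; rfl
  · intro q h
    obtain ⟨⟨x, n⟩, hq⟩ := q
    refine Subtype.ext (Prod.ext ?_ rfl)
    have e : G.unit (p n) = G.unit (r.J x) := congrArg G.unit hq.symm
    refine (r.act_congr e x _ ?_).trans (hr.act_unit x _)
    exact hG.s_unit _
  · intro a b q hhx hgh h1 h2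
    refine Subtype.ext (Prod.ext ?_ rfl)
    exact hr.act_comp a.val.2.1 b.val.2.1 q.val.1 _ _ _ _

end

section StatementOneAux

variable {C : DiffCtxCore} (hC : DiffCtxLaws C)
include hC

theorem s1_pull_zero {X Y : Type} (f : X → Y) (k : ℕ) :
    C.pull f (0 : C.Form Y k) = 0 := by
  have h := hC.pull_add f (0 : C.Form Y k) 0
  rw [add_zero] at h
  have h' : C.pull f (0 : C.Form Y k) + 0
      = C.pull f (0 : C.Form Y k) + C.pull f (0 : C.Form Y k) := by
    rw [add_zero]; exact h
  exact (add_left_cancel h').symm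

theorem s1_pull_neg {X Y : Type} (f : X → Y) {k : ℕ} (a : C.Form Y k) :
    C.pull f (-a) = -C.pull f a := by
  have h := hC.pull_add f a (-a)
  rw [add_neg_cancel, s1_pull_zero hC] at h
  exact eq_neg_of_add_eq_zero_right h.symm

theorem s1_pull_sub {X Y : Type} (f : X → Y) {k : ℕ} (a b : C.Form Y k) :
    C.pull f (a - b) = C.pull f a - C.pull f b := by
  rw [sub_eq_add_neg, hC.pull_add, s1_pull_neg hC, sub_eq_add_neg]

theorem s1_d_zero {X : Type} (k : ℕ) : C.d (0 : C.Form X k) = 0 := by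
  have h := hC.d_add (0 : C.Form X k) 0
  rw [add_zero] at h
  have h' : C.d (0 : C.Form X k) + 0
      = C.d (0 : C.Form X k) + C.d (0 : C.Form X k) := by
    rw [add_zero]; exact h
  exact (add_left_cancel h').symm

theorem s1_d_neg {X : Type} {k : ℕ} (a : C.Form X k) : C.d (-a) = -C.d a := by
  have h := hC.d_add a (-a)
  rw [add_neg_cancel, s1_d_zero hC] at h
  exact eq_neg_of_add_eq_zero_right h.symm

variable {O A X1 X2 : Type} {G : GrpdOn O A} {P : PQS C G}
  (H1 : PreHamOn C P X1) (H2 : PreHamOn C P X2)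

/-- The closed 2-form `i^*(-ω₂, ω₁)` on the fibered product. -/
def s1_form : C.Form { q : X2 × X1 // H2.ρ.J q.1 = H1.ρ.J q.2 } 2 :=
  -C.pull (fun q : { q : X2 × X1 // H2.ρ.J q.1 = H1.ρ.J q.2 } => q.val.1) H2.wX
  + C.pull (fun q : { q : X2 × X1 // H2.ρ.J q.1 = H1.ρ.J q.2 } => q.val.2) H1.wX

theorem s1_inv :
    C.pull (fun p : (diagPreHamAction C H2 H1).Mor => p.val.2) (s1_form H1 H2)
      = C.pull (fun p : (diagPreHamAction C H2 H1).Mor =>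
          (diagPreHamAction C H2 H1).act p.val.1 p.val.2 p.property)
          (s1_form H1 H2) := by
  set Y := { q : X2 × X1 // H2.ρ.J q.1 = H1.ρ.J q.2 }
  set r := diagPreHamAction C H2 H1 with hrdef
  let f1 : r.Mor → H1.ρ.Mor := fun p => ⟨(p.val.1, p.val.2.val.2), p.property⟩
  let f2 : r.Mor → H2.ρ.Mor := fun p =>
    ⟨(p.val.1, p.val.2.val.1), p.property.trans p.val.2.property.symm⟩
  have e1 : C.pull (fun p : r.Mor => p.val.1) P.w
      + C.pull (fun p : r.Mor => p.val.2.val.2) H1.wX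
      - C.pull (fun p : r.Mor => (r.act p.val.1 p.val.2 p.property).val.2) H1.wX
      = 0 := by
    have h := congrArg (C.pull f1) H1.isotropic
    rw [s1_pull_zero hC, s1_pull_sub hC, hC.pull_add] at h
    rw [← hC.pull_comp f1 (fun p : H1.ρ.Mor => p.val.1) P.w,
      ← hC.pull_comp f1 (fun p : H1.ρ.Mor => p.val.2) H1.wX,
      ← hC.pull_comp f1
        (fun p : H1.ρ.Mor => H1.ρ.act p.val.1 p.val.2 p.property) H1.wX] at h
    exact h
  have e2 : C.pull (fun p : r.Mor => p.val.1) P.w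
      + C.pull (fun p : r.Mor => p.val.2.val.1) H2.wX
      - C.pull (fun p : r.Mor => (r.act p.val.1 p.val.2 p.property).val.1) H2.wX
      = 0 := by
    have h := congrArg (C.pull f2) H2.isotropic
    rw [s1_pull_zero hC, s1_pull_sub hC, hC.pull_add] at h
    rw [← hC.pull_comp f2 (fun p : H2.ρ.Mor => p.val.1) P.w,
      ← hC.pull_comp f2 (fun p : H2.ρ.Mor => p.val.2) H2.wX,
      ← hC.pull_comp f2
        (fun p : H2.ρ.Mor => H2.ρ.act p.val.1 p.val.2 p.property) H2.wX] at h
    exact h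
  have l2 : C.pull (fun p : r.Mor => p.val.2) (C.pull (fun q : Y => q.val.1) H2.wX)
      = C.pull (fun p : r.Mor => p.val.2.val.1) H2.wX :=
    (hC.pull_comp (fun p : r.Mor => p.val.2) (fun q : Y => q.val.1) H2.wX).symm
  have l1 : C.pull (fun p : r.Mor => p.val.2) (C.pull (fun q : Y => q.val.2) H1.wX)
      = C.pull (fun p : r.Mor => p.val.2.val.2) H1.wX :=
    (hC.pull_comp (fun p : r.Mor => p.val.2) (fun q : Y => q.val.2) H1.wX).symm
  have m2 : C.pull (fun p : r.Mor => r.act p.val.1 p.val.2 p.property)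
        (C.pull (fun q : Y => q.val.1) H2.wX)
      = C.pull (fun p : r.Mor => (r.act p.val.1 p.val.2 p.property).val.1) H2.wX :=
    (hC.pull_comp (fun p : r.Mor => r.act p.val.1 p.val.2 p.property)
      (fun q : Y => q.val.1) H2.wX).symm
  have m1 : C.pull (fun p : r.Mor => r.act p.val.1 p.val.2 p.property)
        (C.pull (fun q : Y => q.val.2) H1.wX)
      = C.pull (fun p : r.Mor => (r.act p.val.1 p.val.2 p.property).val.2) H1.wX :=
    (hC.pull_comp (fun p : r.Mor => r.act p.val.1 p.val.2 p.property)
      (fun q : Y => q.val.2) H1.wX).symm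
  show C.pull (fun p : r.Mor => p.val.2)
      (-C.pull (fun q : Y => q.val.1) H2.wX + C.pull (fun q : Y => q.val.2) H1.wX)
    = C.pull (fun p : r.Mor => r.act p.val.1 p.val.2 p.property)
      (-C.pull (fun q : Y => q.val.1) H2.wX + C.pull (fun q : Y => q.val.2) H1.wX)
  rw [hC.pull_add, hC.pull_add, s1_pull_neg hC, s1_pull_neg hC, l1, l2, m1, m2]
  apply eq_of_sub_eq_zero
  calc (-C.pull (fun p : r.Mor => p.val.2.val.1) H2.wX
          + C.pull (fun p : r.Mor => p.val.2.val.2) H1.wX)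
        - (-C.pull (fun p : r.Mor => (r.act p.val.1 p.val.2 p.property).val.1) H2.wX
          + C.pull (fun p : r.Mor => (r.act p.val.1 p.val.2 p.property).val.2) H1.wX)
      = (C.pull (fun p : r.Mor => p.val.1) P.w
          + C.pull (fun p : r.Mor => p.val.2.val.2) H1.wX
          - C.pull (fun p : r.Mor => (r.act p.val.1 p.val.2 p.property).val.2) H1.wX)
        - (C.pull (fun p : r.Mor => p.val.1) P.w
          + C.pull (fun p : r.Mor => p.val.2.val.1) H2.wX
          - C.pull (fun p : r.Mor => (r.act p.val.1 p.val.2 p.property).val.1) H2.wX) := by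
        abel
    _ = 0 := by rw [e1, e2, sub_zero]

theorem s1_closed : C.d (s1_form H1 H2) = 0 := by
  set Y := { q : X2 × X1 // H2.ρ.J q.1 = H1.ρ.J q.2 }
  have c2 : C.pull (fun q : Y => q.val.1) (C.d H2.wX)
      = C.pull (fun q : Y => H2.ρ.J q.val.1) P.W := by
    rw [H2.dwX]
    exact (hC.pull_comp (fun q : Y => q.val.1) H2.ρ.J P.W).symm
  have c1 : C.pull (fun q : Y => q.val.2) (C.d H1.wX)
      = C.pull (fun q : Y => H1.ρ.J q.val.2) P.W := by
    rw [H1.dwX]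
    exact (hC.pull_comp (fun q : Y => q.val.2) H1.ρ.J P.W).symm
  have hfun : (fun q : Y => H2.ρ.J q.val.1) = fun q : Y => H1.ρ.J q.val.2 :=
    funext fun q => q.property
  show C.d (-C.pull (fun q : Y => q.val.1) H2.wX
      + C.pull (fun q : Y => q.val.2) H1.wX) = 0
  rw [hC.d_add, s1_d_neg hC, ← hC.pull_d, ← hC.pull_d, c1, c2, hfun,
    neg_add_cancel]

end StatementOneAux

/-- Proposition 2.4: for pre-Hamiltonian `Γ`-spaces
`(X₁, ω₁)` and `(X₂, ω₂)` such that `Γ\(X̄₂ ×_M X₁)` is a smooth manifold, the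
closed 2-form `i^*(-ω₂, ω₁)` descends to a closed 2-form on the classical
intertwiner space `X̄₂ ×_Γ X₁`, which is therefore presymplectic. -/
theorem statement1 (C : DiffCtxCore) (hC : DiffCtxLaws C) {O A X1 X2 Qx : Type}
    (G : GrpdOn O A) (hG : GrpdLaws G) (P : PQS C G)
    (H1 : PreHamOn C P X1) (H2 : PreHamOn C P X2)
    (Qd : QuotientManifold C (diagPreHamAction C H2 H1) Qx) :
    ∃ σ : C.Form Qx 2,
      C.pull Qd.pr σ =
        -C.pull (fun q : { q : X2 × X1 // H2.ρ.J q.1 = H1.ρ.J q.2 } => q.val.1)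
            H2.wX
        + C.pull (fun q : { q : X2 × X1 // H2.ρ.J q.1 = H1.ρ.J q.2 } => q.val.2)
            H1.wX
      ∧ C.d σ = 0 := by
  obtain ⟨σ, hσ⟩ := Qd.descend 2 (s1_form H1 H2) (s1_inv hC H1 H2)
  refine ⟨σ, hσ, ?_⟩
  refine Qd.pull_inj 3 (C.d σ) 0 ?_
  rw [hC.pull_d, hσ]
  show C.d (s1_form H1 H2) = C.pull Qd.pr 0
  rw [s1_closed hC H1 H2, s1_pull_zero hC]
end

section
/- Let (Γ ⇉ M, ω + Ω) be an exact pre-quasi-symplectic groupoid with prequantization (R → Γ ⇉ M, θ + B). Let (X_k →^{J_k} M, ω_k), k = 1, 2, be pre-Hamiltonian Γ-spaces such that Γ ⇉ M acts freely on X̄₂ ×_M X₁ and X̄₂ ×_Γ X₁ = Γ\(X̄₂ ×_M X₁) is a smooth manifold, and let (L_k →^{φ_k} X_k, θ_k) be compatible prequantizations. Then φ: R\(L₂ ×_M L̄₁) → X̄₂ ×_Γ X₁, φ[l₂, l₁] = [φ₂(l₂), φ₁(l₁)], with S¹-action λ·[l₂, l₁] = [λ·l₂, l₁], is a principal S¹-bundle;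 moreover i*(θ₂, −θ₁) descends to a connection 1-form on R\(L₂ ×_M L̄₁) whose curvature equals the presymplectic form of the classical intertwiner space, i.e. it defines a prequantization of X̄₂ ×_Γ X₁ (here i: L₂ ×_M L̄₁ → L₂ × L̄₁ is the natural embedding). -/
/-! ## Auxiliary lemmas for Statement 7 -/

section Statement7Aux

theorem pull_zero' (C : DiffCtxCore) (hC : DiffCtxLaws C) {X Y : Type}
    (f : X → Y) {k : ℕ} : C.pull f (0 : C.Form Y k) = 0 := by
  have h := hC.pull_add f (0 : C.Form Y k) 0
  rw [add_zero] at h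
  exact left_eq_add.mp h

theorem pull_neg' (C : DiffCtxCore) (hC : DiffCtxLaws C) {X Y : Type}
    (f : X → Y) {k : ℕ} (a : C.Form Y k) : C.pull f (-a) = -C.pull f a := by
  have h := hC.pull_add f a (-a)
  rw [add_neg_cancel, pull_zero' C hC f] at h
  exact (neg_eq_of_add_eq_zero_right h.symm).symm

theorem pull_sub' (C : DiffCtxCore) (hC : DiffCtxLaws C) {X Y : Type}
    (f : X → Y) {k : ℕ} (a b : C.Form Y k) :
    C.pull f (a - b) = C.pull f a - C.pull f b := by
  rw [sub_eq_add_neg, hC.pull_add, pull_neg' C hC, sub_eq_add_neg]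

theorem d_zero' (C : DiffCtxCore) (hC : DiffCtxLaws C) {X : Type} {k : ℕ} :
    C.d (0 : C.Form X k) = 0 := by
  have h := hC.d_add (0 : C.Form X k) 0
  rw [add_zero] at h
  exact left_eq_add.mp h

theorem d_neg' (C : DiffCtxCore) (hC : DiffCtxLaws C) {X : Type} {k : ℕ}
    (a : C.Form X k) : C.d (-a) = -C.d a := by
  have h := hC.d_add a (-a)
  rw [add_neg_cancel, d_zero' C hC] at h
  exact (neg_eq_of_add_eq_zero_right h.symm).symm

theorem d_sub' (C : DiffCtxCore) (hC : DiffCtxLaws C) {X : Type} {k : ℕ}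
    (a b : C.Form X k) : C.d (a - b) = C.d a - C.d b := by
  rw [sub_eq_add_neg, hC.d_add, d_neg' C hC, sub_eq_add_neg]

variable {C : DiffCtxCore} {O A : Type} {G : GrpdOn O A} {P : PQS C G}
  {R : Type} {E : CentExt G R} {hR : GrpdLaws E.RG} {Q : Preq C P E hR}
  {X L : Type} {H : PreHamOn C P X}

theorem lact_congr' (c : CompatPreq C Q H L) {q q' : R} (hq : q = q')
    {l l' : L} (hl : l = l') (h : E.RG.s q = H.ρ.J (c.φ l))
    (h' : E.RG.s q' = H.ρ.J (c.φ l')) : c.lact q l h = c.lact q' l' h' := by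
  subst hq; subst hl; rfl

theorem lact_smul' (c : CompatPreq C Q H L) (lam : Circle) (q : R) (l : L)
    (h : E.RG.s (E.smul lam q) = H.ρ.J (c.φ l))
    (h' : E.RG.s q = H.ρ.J (c.φ l)) :
    c.lact (E.smul lam q) l h = c.lsmul lam (c.lact q l h') := by
  have h2 : E.RG.s (E.smul lam q) = H.ρ.J (c.φ (c.lsmul 1 l)) :=
    h.trans (congrArg (fun t => H.ρ.J (c.φ t)) (c.lsmul_one l)).symm
  calc c.lact (E.smul lam q) l h
      = c.lact (E.smul lam q) (c.lsmul 1 l) h2 :=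
        lact_congr' c rfl (c.lsmul_one l).symm _ _
    _ = c.lsmul (lam * 1) (c.lact q l h') := c.lact_lsmul lam 1 q l h2 h'
    _ = c.lsmul lam (c.lact q l h') := by rw [mul_one]

theorem lact_lsmul0' (c : CompatPreq C Q H L) (z : Circle) (q : R) (l : L)
    (h : E.RG.s q = H.ρ.J (c.φ (c.lsmul z l)))
    (h' : E.RG.s q = H.ρ.J (c.φ l)) :
    c.lact q (c.lsmul z l) h = c.lsmul z (c.lact q l h') := by
  have h2 : E.RG.s (E.smul 1 q) = H.ρ.J (c.φ (c.lsmul z l)) :=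
    (congrArg E.RG.s (E.one_smul q)).trans h
  calc c.lact q (c.lsmul z l) h
      = c.lact (E.smul 1 q) (c.lsmul z l) h2 :=
        lact_congr' c (E.one_smul q).symm rfl _ _
    _ = c.lsmul (1 * z) (c.lact q l h') := c.lact_lsmul 1 z q l h2 h'
    _ = c.lsmul z (c.lact q l h') := by rw [one_mul]

theorem lact_smul_unit' (c : CompatPreq C Q H L) (lam : Circle) (l : L)
    (h : E.RG.s (E.smul lam (E.RG.unit (H.ρ.J (c.φ l)))) = H.ρ.J (c.φ l)) :
    c.lact (E.smul lam (E.RG.unit (H.ρ.J (c.φ l)))) l h = c.lsmul lam l := by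
  have hu : E.RG.s (E.RG.unit (H.ρ.J (c.φ l))) = H.ρ.J (c.φ l) := hR.s_unit _
  calc c.lact (E.smul lam (E.RG.unit (H.ρ.J (c.φ l)))) l h
      = c.lsmul lam (c.lact (E.RG.unit (H.ρ.J (c.φ l))) l hu) :=
        lact_smul' c lam _ l h hu
    _ = c.lsmul lam l := by rw [c.lact_unit l hu]

theorem const_pull' (hC : DiffCtxLaws C) (c : CompatPreq C Q H L) (l : L) :
    C.pull (fun _ : Circle => l) c.θL = 0 := by
  let F : Circle → { q : R × L // E.RG.s q.1 = H.ρ.J (c.φ q.2) } := fun z =>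
    ⟨(E.smul z (E.RG.unit (H.ρ.J (c.φ l))), l),
      (E.s_smul z _).trans (hR.s_unit _)⟩
  have hg := congrArg (C.pull F) c.graph
  rw [pull_sub' C hC, hC.pull_add, pull_zero' C hC] at hg
  have eA : C.pull (fun z : Circle => E.smul z (E.RG.unit (H.ρ.J (c.φ l)))) Q.θ
      = C.pull F (C.pull
        (fun q : { q : R × L // E.RG.s q.1 = H.ρ.J (c.φ q.2) } => q.val.1)
        Q.θ) :=
    hC.pull_comp F (fun q : { q : R × L // E.RG.s q.1 = H.ρ.J (c.φ q.2) } =>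
      q.val.1) Q.θ
  have eB : C.pull (fun _ : Circle => l) c.θL
      = C.pull F (C.pull
        (fun q : { q : R × L // E.RG.s q.1 = H.ρ.J (c.φ q.2) } => q.val.2)
        c.θL) :=
    hC.pull_comp F (fun q : { q : R × L // E.RG.s q.1 = H.ρ.J (c.φ q.2) } =>
      q.val.2) c.θL
  have eC1 : (fun z : Circle =>
      c.lact (E.smul z (E.RG.unit (H.ρ.J (c.φ l)))) l
        ((E.s_smul z _).trans (hR.s_unit _)))
      = fun z : Circle => c.lsmul z l :=
    funext fun z => lact_smul_unit' c z l _
  have eC : C.pull (fun z : Circle => c.lsmul z l) c.θL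
      = C.pull F (C.pull
        (fun q : { q : R × L // E.RG.s q.1 = H.ρ.J (c.φ q.2) } =>
          c.lact q.val.1 q.val.2 q.property) c.θL) := by
    rw [← eC1]
    exact hC.pull_comp F (fun q : { q : R × L // E.RG.s q.1 = H.ρ.J (c.φ q.2) } =>
      c.lact q.val.1 q.val.2 q.property) c.θL
  rw [← eA, ← eB, ← eC, Q.conn (E.RG.unit (H.ρ.J (c.φ l))), c.connL l] at hg
  rw [add_sub_cancel_left] at hg
  exact hg

end Statement7Aux

/-- Theorem 4.6: given compatible prequantizations
`(L_k, θ_k)` of the pre-Hamiltonian spaces `X_k`, the quotient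
`R\(L₂ ×_M L̄₁)` is a principal `S¹`-bundle over the classical intertwiner
space `X̄₂ ×_Γ X₁` (with `λ·[l₂, l₁] = [λ·l₂, l₁]`), and `i^*(θ₂, -θ₁)`
descends to a connection 1-form whose curvature is the presymplectic form of
the intertwiner space, defining a prequantization of `X̄₂ ×_Γ X₁`. -/
theorem statement7 (C : DiffCtxCore) (hC : DiffCtxLaws C)
    {O A R X1 X2 L1 L2 Qx Ql : Type}
    (G : GrpdOn O A) (hG : GrpdLaws G) (P : PQS C G) (hex : P.IsExact)
    (E : CentExt G R) (hR : GrpdLaws E.RG) (Q : Preq C P E hR)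
    (H1 : PreHamOn C P X1) (H2 : PreHamOn C P X2)
    (c1 : CompatPreq C Q H1 L1) (c2 : CompatPreq C Q H2 L2)
    (hfree : ∀ g q h, (diagPreHamAction C H2 H1).act g q h = q →
      g = G.unit ((diagPreHamAction C H2 H1).J q))
    (Qb : QuotientManifold C (diagPreHamAction C H2 H1) Qx)
    (σ : C.Form Qx 2)
    (hσ : C.pull Qb.pr σ =
      -C.pull (fun q : { q : X2 × X1 // H2.ρ.J q.1 = H1.ρ.J q.2 } => q.val.1)
          H2.wX
      + C.pull (fun q : { q : X2 × X1 // H2.ρ.J q.1 = H1.ρ.J q.2 } => q.val.2)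
          H1.wX)
    (Qd : QuotientManifold C (diagPreqAction C c2 c1) Ql) :
    ∃ (pφ : Ql → Qx) (sm : Circle → Ql → Ql) (θQ : C.Form Ql 1),
      (∀ y : { y : L2 × L1 // H2.ρ.J (c2.φ y.1) = H1.ρ.J (c1.φ y.2) },
        pφ (Qd.pr y) = Qb.pr ⟨(c2.φ y.val.1, c1.φ y.val.2), y.property⟩) ∧
      (∀ (z : Circle)
        (y : { y : L2 × L1 // H2.ρ.J (c2.φ y.1) = H1.ρ.J (c1.φ y.2) }),
        sm z (Qd.pr y)
          = Qd.pr ⟨(c2.lsmul z y.val.1, y.val.2),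
              (congrArg H2.ρ.J (c2.φ_lsmul z y.val.1)).trans y.property⟩) ∧
      (∀ u, sm 1 u = u) ∧
      (∀ z v u, sm (z * v) u = sm z (sm v u)) ∧
      (∀ z u, pφ (sm z u) = pφ u) ∧
      (∀ z u, sm z u = u → z = 1) ∧
      (∀ u u', pφ u = pφ u' → ∃ z, sm z u = u') ∧
      Function.Surjective pφ ∧
      C.pull Qd.pr θQ
        = C.pull
            (fun y : { y : L2 × L1 // H2.ρ.J (c2.φ y.1) = H1.ρ.J (c1.φ y.2) } =>
              y.val.1) c2.θL
          - C.pull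
              (fun y : { y : L2 × L1 //
                  H2.ρ.J (c2.φ y.1) = H1.ρ.J (c1.φ y.2) } => y.val.2) c1.θL ∧
      IsConnForm C sm θQ ∧
      C.d θQ = C.pull pφ σ := by
  classical
  let Yt := { y : L2 × L1 // H2.ρ.J (c2.φ y.1) = H1.ρ.J (c1.φ y.2) }
  let Φ : Yt → { q : X2 × X1 // H2.ρ.J q.1 = H1.ρ.J q.2 } := fun y =>
    ⟨(c2.φ y.val.1, c1.φ y.val.2), y.property⟩
  let shift : Circle → Yt → Yt := fun z y =>
    ⟨(c2.lsmul z y.val.1, y.val.2),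
      (congrArg H2.ρ.J (c2.φ_lsmul z y.val.1)).trans y.property⟩
  let sec : Ql → Yt := Function.surjInv Qd.surj
  have hsec : ∀ u, Qd.pr (sec u) = u := fun u => Function.surjInv_eq Qd.surj u
  have W1 : ∀ y y' : Yt, Qd.pr y = Qd.pr y' → Qb.pr (Φ y) = Qb.pr (Φ y') := by
    intro y y' h
    obtain ⟨q, hq, e⟩ := Qd.fibers y y' h
    have hπq : G.s (E.π q) = H1.ρ.J (c1.φ y.val.2) := (E.π_s q).trans hq
    have key : (diagPreHamAction C H2 H1).act (E.π q) (Φ y) hπq = Φ y' := by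
      refine Subtype.ext (Prod.ext ?_ ?_)
      · have e1 : c2.lact q y.val.1 (hq.trans y.property.symm) = y'.val.1 :=
          congrArg (fun t : Yt => t.val.1) e
        have h2 := c2.φ_lact q y.val.1 (hq.trans y.property.symm)
          ((E.π_s q).trans (hq.trans y.property.symm))
        exact h2.symm.trans (congrArg c2.φ e1)
      · have e2 : c1.lact q y.val.2 hq = y'.val.2 :=
          congrArg (fun t : Yt => t.val.2) e
        have h1 := c1.φ_lact q y.val.2 hq ((E.π_s q).trans hq)
        exact h1.symm.trans (congrArg c1.φ e2)
    calc Qb.pr (Φ y)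
        = Qb.pr ((diagPreHamAction C H2 H1).act (E.π q) (Φ y) hπq) :=
          (Qb.invariant _ _ _).symm
      _ = Qb.pr (Φ y') := congrArg Qb.pr key
  have W2 : ∀ (z : Circle) (y y' : Yt), Qd.pr y = Qd.pr y' →
      Qd.pr (shift z y) = Qd.pr (shift z y') := by
    intro z y y' h
    obtain ⟨q, hq, e⟩ := Qd.fibers y y' h
    have e1 : c2.lact q y.val.1 (hq.trans y.property.symm) = y'.val.1 :=
      congrArg (fun t : Yt => t.val.1) e
    have e2 : c1.lact q y.val.2 hq = y'.val.2 :=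
      congrArg (fun t : Yt => t.val.2) e
    have hq' : E.RG.s q = (diagPreqAction C c2 c1).J (shift z y) := hq
    have act_eq : (diagPreqAction C c2 c1).act q (shift z y) hq' = shift z y' := by
      refine Subtype.ext (Prod.ext ?_ ?_)
      · calc c2.lact q (c2.lsmul z y.val.1) (hq'.trans (shift z y).property.symm)
            = c2.lsmul z (c2.lact q y.val.1 (hq.trans y.property.symm)) :=
              lact_lsmul0' c2 z q y.val.1 _ _
          _ = c2.lsmul z y'.val.1 := by rw [e1]
      · exact e2
    calc Qd.pr (shift z y)
        = Qd.pr ((diagPreqAction C c2 c1).act q (shift z y) hq') :=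
          (Qd.invariant _ _ _).symm
      _ = Qd.pr (shift z y') := congrArg Qd.pr act_eq
  let pφ : Ql → Qx := fun u => Qb.pr (Φ (sec u))
  let sm : Circle → Ql → Ql := fun z u => Qd.pr (shift z (sec u))
  have pφ_pr : ∀ y : Yt, pφ (Qd.pr y) = Qb.pr (Φ y) := fun y =>
    W1 (sec (Qd.pr y)) y (hsec (Qd.pr y))
  have sm_pr : ∀ (z : Circle) (y : Yt), sm z (Qd.pr y) = Qd.pr (shift z y) :=
    fun z y => W2 z (sec (Qd.pr y)) y (hsec (Qd.pr y))
  -- freeness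
  have freelem : ∀ (z : Circle) (y : Yt), Qd.pr (shift z y) = Qd.pr y → z = 1 := by
    intro z y h0
    obtain ⟨q, hq, e⟩ := Qd.fibers (shift z y) y h0
    have e1 : c2.lact q (c2.lsmul z y.val.1)
        (hq.trans (shift z y).property.symm) = y.val.1 :=
      congrArg (fun t : Yt => t.val.1) e
    have e2 : c1.lact q y.val.2 hq = y.val.2 :=
      congrArg (fun t : Yt => t.val.2) e
    have hπq : G.s (E.π q) = H1.ρ.J (c1.φ y.val.2) := (E.π_s q).trans hq
    have keyX : (diagPreHamAction C H2 H1).act (E.π q) (Φ y) hπq = Φ y := by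
      refine Subtype.ext (Prod.ext ?_ ?_)
      · have pf1 : G.s (E.π q) = H2.ρ.J (c2.φ (c2.lsmul z y.val.1)) :=
          hπq.trans (shift z y).property.symm
        have kact : ∀ (x x' : X2) (hxx : x = x')
            (h : G.s (E.π q) = H2.ρ.J x) (h' : G.s (E.π q) = H2.ρ.J x'),
            H2.ρ.act (E.π q) x h = H2.ρ.act (E.π q) x' h' := by
          intro x x' hxx h h'; subst hxx; rfl
        calc H2.ρ.act (E.π q) (c2.φ y.val.1) (hπq.trans (Φ y).property.symm)
            = H2.ρ.act (E.π q) (c2.φ (c2.lsmul z y.val.1)) pf1 :=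
              kact _ _ (c2.φ_lsmul z y.val.1).symm _ pf1
          _ = c2.φ (c2.lact q (c2.lsmul z y.val.1)
                (hq.trans (shift z y).property.symm)) :=
              (c2.φ_lact q (c2.lsmul z y.val.1)
                (hq.trans (shift z y).property.symm) pf1).symm
          _ = c2.φ y.val.1 := congrArg c2.φ e1
      · exact (c1.φ_lact q y.val.2 hq hπq).symm.trans (congrArg c1.φ e2)
    have hπ1 : E.π q = G.unit (H1.ρ.J (c1.φ y.val.2)) :=
      hfree (E.π q) (Φ y) hπq keyX
    obtain ⟨lam, hlam⟩ := E.fib_trans (E.RG.unit (H1.ρ.J (c1.φ y.val.2))) q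
      ((E.π_unit _).trans hπ1.symm)
    have hsl : E.RG.s (E.smul lam (E.RG.unit (H1.ρ.J (c1.φ y.val.2))))
        = H1.ρ.J (c1.φ y.val.2) := (E.s_smul _ _).trans (hR.s_unit _)
    have hls : c1.lsmul lam y.val.2 = y.val.2 := by
      calc c1.lsmul lam y.val.2
          = c1.lact (E.smul lam (E.RG.unit (H1.ρ.J (c1.φ y.val.2)))) y.val.2
              hsl := (lact_smul_unit' c1 lam y.val.2 hsl).symm
        _ = c1.lact q y.val.2 hq := lact_congr' c1 hlam rfl hsl hq
        _ = y.val.2 := e2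
    have hlam1 : lam = 1 := c1.lfree lam y.val.2 hls
    have hq1 : q = E.RG.unit (H1.ρ.J (c1.φ y.val.2)) := by
      rw [← hlam, hlam1, E.one_smul]
    have hz : c2.lsmul z y.val.1 = y.val.1 := by
      have hm2 : E.RG.unit (H1.ρ.J (c1.φ y.val.2))
          = E.RG.unit (H2.ρ.J (c2.φ (c2.lsmul z y.val.1))) :=
        congrArg E.RG.unit ((shift z y).property).symm
      calc c2.lsmul z y.val.1
          = c2.lact (E.RG.unit (H2.ρ.J (c2.φ (c2.lsmul z y.val.1))))
              (c2.lsmul z y.val.1) (hR.s_unit _) :=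
            (c2.lact_unit (c2.lsmul z y.val.1) (hR.s_unit _)).symm
        _ = c2.lact q (c2.lsmul z y.val.1)
              (hq.trans (shift z y).property.symm) :=
            lact_congr' c2 (hq1.trans hm2).symm rfl _ _
        _ = y.val.1 := e1
    exact c2.lfree z y.val.1 hz
  -- transitivity on fibres of pφ
  have translem : ∀ y y' : Yt, Qb.pr (Φ y) = Qb.pr (Φ y') →
      ∃ z : Circle, Qd.pr (shift z y) = Qd.pr y' := by
    intro y y' h
    obtain ⟨g, hg, e⟩ := Qb.fibers (Φ y) (Φ y') h
    have eX2 : H2.ρ.act g (c2.φ y.val.1) (hg.trans (Φ y).property.symm)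
        = c2.φ y'.val.1 :=
      congrArg (fun t : { q : X2 × X1 // H2.ρ.J q.1 = H1.ρ.J q.2 } => t.val.1) e
    have eX1 : H1.ρ.act g (c1.φ y.val.2) hg = c1.φ y'.val.2 :=
      congrArg (fun t : { q : X2 × X1 // H2.ρ.J q.1 = H1.ρ.J q.2 } => t.val.2) e
    obtain ⟨q, hπ⟩ := E.π_surj g
    have hq1 : E.RG.s q = H1.ρ.J (c1.φ y.val.2) := by
      rw [← E.π_s q, hπ]; exact hg
    have hq2 : E.RG.s q = H2.ρ.J (c2.φ y.val.1) := hq1.trans y.property.symm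
    have kact1 : ∀ (a a' : A) (haa : a = a') (x : X1)
        (h : G.s a = H1.ρ.J x) (h' : G.s a' = H1.ρ.J x),
        H1.ρ.act a x h = H1.ρ.act a' x h' := by
      intro a a' haa x h h'; subst haa; rfl
    have kact2 : ∀ (a a' : A) (haa : a = a') (x : X2)
        (h : G.s a = H2.ρ.J x) (h' : G.s a' = H2.ρ.J x),
        H2.ρ.act a x h = H2.ρ.act a' x h' := by
      intro a a' haa x h h'; subst haa; rfl
    have hφ1 : c1.φ (c1.lact q y.val.2 hq1) = c1.φ y'.val.2 := by
      calc c1.φ (c1.lact q y.val.2 hq1)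
          = H1.ρ.act (E.π q) (c1.φ y.val.2) ((E.π_s q).trans hq1) :=
            c1.φ_lact q y.val.2 hq1 _
        _ = H1.ρ.act g (c1.φ y.val.2) hg := kact1 _ _ hπ _ _ _
        _ = c1.φ y'.val.2 := eX1
    obtain ⟨μ, hμ⟩ := c1.lfib_trans _ _ hφ1
    have hφ2 : c2.φ (c2.lact q y.val.1 hq2) = c2.φ y'.val.1 := by
      calc c2.φ (c2.lact q y.val.1 hq2)
          = H2.ρ.act (E.π q) (c2.φ y.val.1) ((E.π_s q).trans hq2) :=
            c2.φ_lact q y.val.1 hq2 _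
        _ = H2.ρ.act g (c2.φ y.val.1) (hg.trans (Φ y).property.symm) :=
            kact2 _ _ hπ _ _ _
        _ = c2.φ y'.val.1 := eX2
    obtain ⟨ν, hν⟩ := c2.lfib_trans _ _ hφ2
    refine ⟨ν * μ⁻¹, ?_⟩
    have hq' : E.RG.s (E.smul μ q)
        = (diagPreqAction C c2 c1).J (shift (ν * μ⁻¹) y) :=
      (E.s_smul μ q).trans hq1
    have act_eq : (diagPreqAction C c2 c1).act (E.smul μ q)
        (shift (ν * μ⁻¹) y) hq' = y' := by
      refine Subtype.ext (Prod.ext ?_ ?_)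
      · have s1 : E.RG.s q = H2.ρ.J (c2.φ (c2.lsmul (ν * μ⁻¹) y.val.1)) :=
          hq2.trans (congrArg H2.ρ.J (c2.φ_lsmul _ _)).symm
        calc c2.lact (E.smul μ q) (c2.lsmul (ν * μ⁻¹) y.val.1)
              (hq'.trans (shift (ν * μ⁻¹) y).property.symm)
            = c2.lsmul μ (c2.lact q (c2.lsmul (ν * μ⁻¹) y.val.1) s1) :=
              lact_smul' c2 μ q _ _ s1
          _ = c2.lsmul μ (c2.lsmul (ν * μ⁻¹) (c2.lact q y.val.1 hq2)) := by
              rw [lact_lsmul0' c2 (ν * μ⁻¹) q y.val.1 s1 hq2]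
          _ = c2.lsmul (μ * (ν * μ⁻¹)) (c2.lact q y.val.1 hq2) :=
              (c2.lsmul_mul _ _ _).symm
          _ = c2.lsmul ν (c2.lact q y.val.1 hq2) := by
              rw [mul_comm ν μ⁻¹, ← mul_assoc, mul_inv_cancel, one_mul]
          _ = y'.val.1 := hν
      · calc c1.lact (E.smul μ q) y.val.2 hq'
            = c1.lsmul μ (c1.lact q y.val.2 hq1) :=
              lact_smul' c1 μ q _ hq' hq1
          _ = y'.val.2 := hμ
    calc Qd.pr (shift (ν * μ⁻¹) y)
        = Qd.pr ((diagPreqAction C c2 c1).act (E.smul μ q)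
            (shift (ν * μ⁻¹) y) hq') := (Qd.invariant _ _ _).symm
      _ = Qd.pr y' := congrArg Qd.pr act_eq
  -- the descended connection form
  have E2 : C.pull (fun p : (diagPreqAction C c2 c1).Mor => p.val.1) Q.θ
      + C.pull (fun p : (diagPreqAction C c2 c1).Mor => p.val.2.val.1) c2.θL
      - C.pull (fun p : (diagPreqAction C c2 c1).Mor =>
          ((diagPreqAction C c2 c1).act p.val.1 p.val.2 p.property).val.1) c2.θL
      = 0 := by
    let g2 : (diagPreqAction C c2 c1).Mor →
        { q : R × L2 // E.RG.s q.1 = H2.ρ.J (c2.φ q.2) } := fun p =>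
      ⟨(p.val.1, p.val.2.val.1), p.property.trans p.val.2.property.symm⟩
    have e1 : C.pull (fun p : (diagPreqAction C c2 c1).Mor => p.val.1) Q.θ
        = C.pull g2 (C.pull (fun p : { q : R × L2 //
            E.RG.s q.1 = H2.ρ.J (c2.φ q.2) } => p.val.1) Q.θ) :=
      hC.pull_comp g2 (fun p : { q : R × L2 //
        E.RG.s q.1 = H2.ρ.J (c2.φ q.2) } => p.val.1) Q.θ
    have e2 : C.pull (fun p : (diagPreqAction C c2 c1).Mor => p.val.2.val.1)
          c2.θL
        = C.pull g2 (C.pull (fun p : { q : R × L2 //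
            E.RG.s q.1 = H2.ρ.J (c2.φ q.2) } => p.val.2) c2.θL) :=
      hC.pull_comp g2 (fun p : { q : R × L2 //
        E.RG.s q.1 = H2.ρ.J (c2.φ q.2) } => p.val.2) c2.θL
    have e3 : C.pull (fun p : (diagPreqAction C c2 c1).Mor =>
          ((diagPreqAction C c2 c1).act p.val.1 p.val.2 p.property).val.1) c2.θL
        = C.pull g2 (C.pull (fun p : { q : R × L2 //
            E.RG.s q.1 = H2.ρ.J (c2.φ q.2) } =>
            c2.lact p.val.1 p.val.2 p.property) c2.θL) :=
      hC.pull_comp g2 (fun p : { q : R × L2 //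
        E.RG.s q.1 = H2.ρ.J (c2.φ q.2) } =>
        c2.lact p.val.1 p.val.2 p.property) c2.θL
    rw [e1, e2, e3, ← hC.pull_add, ← pull_sub' C hC, c2.graph,
      pull_zero' C hC]
  have E1 : C.pull (fun p : (diagPreqAction C c2 c1).Mor => p.val.1) Q.θ
      + C.pull (fun p : (diagPreqAction C c2 c1).Mor => p.val.2.val.2) c1.θL
      - C.pull (fun p : (diagPreqAction C c2 c1).Mor =>
          ((diagPreqAction C c2 c1).act p.val.1 p.val.2 p.property).val.2) c1.θL
      = 0 := by
    let g1 : (diagPreqAction C c2 c1).Mor →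
        { q : R × L1 // E.RG.s q.1 = H1.ρ.J (c1.φ q.2) } := fun p =>
      ⟨(p.val.1, p.val.2.val.2), p.property⟩
    have e1 : C.pull (fun p : (diagPreqAction C c2 c1).Mor => p.val.1) Q.θ
        = C.pull g1 (C.pull (fun p : { q : R × L1 //
            E.RG.s q.1 = H1.ρ.J (c1.φ q.2) } => p.val.1) Q.θ) :=
      hC.pull_comp g1 (fun p : { q : R × L1 //
        E.RG.s q.1 = H1.ρ.J (c1.φ q.2) } => p.val.1) Q.θ
    have e2 : C.pull (fun p : (diagPreqAction C c2 c1).Mor => p.val.2.val.2)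
          c1.θL
        = C.pull g1 (C.pull (fun p : { q : R × L1 //
            E.RG.s q.1 = H1.ρ.J (c1.φ q.2) } => p.val.2) c1.θL) :=
      hC.pull_comp g1 (fun p : { q : R × L1 //
        E.RG.s q.1 = H1.ρ.J (c1.φ q.2) } => p.val.2) c1.θL
    have e3 : C.pull (fun p : (diagPreqAction C c2 c1).Mor =>
          ((diagPreqAction C c2 c1).act p.val.1 p.val.2 p.property).val.2) c1.θL
        = C.pull g1 (C.pull (fun p : { q : R × L1 //
            E.RG.s q.1 = H1.ρ.J (c1.φ q.2) } =>
            c1.lact p.val.1 p.val.2 p.property) c1.θL) :=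
      hC.pull_comp g1 (fun p : { q : R × L1 //
        E.RG.s q.1 = H1.ρ.J (c1.φ q.2) } =>
        c1.lact p.val.1 p.val.2 p.property) c1.θL
    rw [e1, e2, e3, ← hC.pull_add, ← pull_sub' C hC, c1.graph,
      pull_zero' C hC]
  have hinv : C.pull (fun p : (diagPreqAction C c2 c1).Mor => p.val.2)
        (C.pull (fun y : Yt => y.val.1) c2.θL
          - C.pull (fun y : Yt => y.val.2) c1.θL)
      = C.pull (fun p : (diagPreqAction C c2 c1).Mor =>
          (diagPreqAction C c2 c1).act p.val.1 p.val.2 p.property)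
        (C.pull (fun y : Yt => y.val.1) c2.θL
          - C.pull (fun y : Yt => y.val.2) c1.θL) := by
    rw [pull_sub' C hC, pull_sub' C hC]
    have a1 : C.pull (fun p : (diagPreqAction C c2 c1).Mor => p.val.2)
          (C.pull (fun y : Yt => y.val.1) c2.θL)
        = C.pull (fun p : (diagPreqAction C c2 c1).Mor => p.val.2.val.1)
            c2.θL :=
      (hC.pull_comp (fun p : (diagPreqAction C c2 c1).Mor => p.val.2)
        (fun y : Yt => y.val.1) c2.θL).symm
    have a2 : C.pull (fun p : (diagPreqAction C c2 c1).Mor => p.val.2)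
          (C.pull (fun y : Yt => y.val.2) c1.θL)
        = C.pull (fun p : (diagPreqAction C c2 c1).Mor => p.val.2.val.2)
            c1.θL :=
      (hC.pull_comp (fun p : (diagPreqAction C c2 c1).Mor => p.val.2)
        (fun y : Yt => y.val.2) c1.θL).symm
    have b1 : C.pull (fun p : (diagPreqAction C c2 c1).Mor =>
          (diagPreqAction C c2 c1).act p.val.1 p.val.2 p.property)
          (C.pull (fun y : Yt => y.val.1) c2.θL)
        = C.pull (fun p : (diagPreqAction C c2 c1).Mor =>
            ((diagPreqAction C c2 c1).act p.val.1 p.val.2 p.property).val.1)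
            c2.θL :=
      (hC.pull_comp (fun p : (diagPreqAction C c2 c1).Mor =>
        (diagPreqAction C c2 c1).act p.val.1 p.val.2 p.property)
        (fun y : Yt => y.val.1) c2.θL).symm
    have b2 : C.pull (fun p : (diagPreqAction C c2 c1).Mor =>
          (diagPreqAction C c2 c1).act p.val.1 p.val.2 p.property)
          (C.pull (fun y : Yt => y.val.2) c1.θL)
        = C.pull (fun p : (diagPreqAction C c2 c1).Mor =>
            ((diagPreqAction C c2 c1).act p.val.1 p.val.2 p.property).val.2)
            c1.θL :=
      (hC.pull_comp (fun p : (diagPreqAction C c2 c1).Mor =>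
        (diagPreqAction C c2 c1).act p.val.1 p.val.2 p.property)
        (fun y : Yt => y.val.2) c1.θL).symm
    rw [a1, a2, b1, b2, ← sub_eq_zero.mp E2, ← sub_eq_zero.mp E1]
    abel
  obtain ⟨θQ, hθQ⟩ := Qd.descend 1
    (C.pull (fun y : Yt => y.val.1) c2.θL
      - C.pull (fun y : Yt => y.val.2) c1.θL) hinv
  refine ⟨pφ, sm, θQ, pφ_pr, fun z y => sm_pr z y, ?_, ?_, ?_, ?_, ?_, ?_,
    hθQ, ?_, ?_⟩
  · -- sm 1 u = u
    intro u
    have h1 : shift 1 (sec u) = sec u :=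
      Subtype.ext (Prod.ext (c2.lsmul_one _) rfl)
    show Qd.pr (shift 1 (sec u)) = u
    rw [h1, hsec]
  · -- sm (z * v) u = sm z (sm v u)
    intro z v u
    have h1 : sm z (sm v u) = Qd.pr (shift z (shift v (sec u))) :=
      W2 z (sec (sm v u)) (shift v (sec u)) (hsec (sm v u))
    rw [h1]
    show Qd.pr (shift (z * v) (sec u)) = _
    exact congrArg Qd.pr (Subtype.ext (Prod.ext (c2.lsmul_mul z v _) rfl))
  · -- pφ (sm z u) = pφ u
    intro z u
    have h1 : pφ (sm z u) = Qb.pr (Φ (shift z (sec u))) :=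
      pφ_pr (shift z (sec u))
    rw [h1]
    show Qb.pr (Φ (shift z (sec u))) = Qb.pr (Φ (sec u))
    exact congrArg Qb.pr (Subtype.ext (Prod.ext (c2.φ_lsmul z _) rfl))
  · -- free
    intro z u hz
    exact freelem z (sec u) (hz.trans (hsec u).symm)
  · -- fibre transitivity
    intro u u' h
    obtain ⟨z, hz⟩ := translem (sec u) (sec u') h
    exact ⟨z, hz.trans (hsec u')⟩
  · -- surjectivity
    intro v
    obtain ⟨x, hx⟩ := Qb.surj v
    obtain ⟨l2, hl2⟩ := c2.φ_surj x.val.1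
    obtain ⟨l1, hl1⟩ := c1.φ_surj x.val.2
    have hy : H2.ρ.J (c2.φ l2) = H1.ρ.J (c1.φ l1) := by
      rw [hl2, hl1]; exact x.property
    refine ⟨Qd.pr ⟨(l2, l1), hy⟩, ?_⟩
    rw [pφ_pr ⟨(l2, l1), hy⟩]
    have hΦ : Φ ⟨(l2, l1), hy⟩ = x := Subtype.ext (Prod.ext hl2 hl1)
    rw [hΦ, hx]
  · -- connection form
    intro u
    have e0 : C.pull (fun z : Circle => sm z u) θQ
        = C.pull (fun z : Circle => shift z (sec u)) (C.pull Qd.pr θQ) :=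
      hC.pull_comp (fun z : Circle => shift z (sec u)) Qd.pr θQ
    rw [e0, hθQ, pull_sub' C hC]
    have e1 : C.pull (fun z : Circle => shift z (sec u))
          (C.pull (fun y : Yt => y.val.1) c2.θL)
        = C.pull (fun z : Circle => c2.lsmul z (sec u).val.1) c2.θL :=
      (hC.pull_comp (fun z : Circle => shift z (sec u))
        (fun y : Yt => y.val.1) c2.θL).symm
    have e2 : C.pull (fun z : Circle => shift z (sec u))
          (C.pull (fun y : Yt => y.val.2) c1.θL)
        = C.pull (fun _ : Circle => (sec u).val.2) c1.θL :=
      (hC.pull_comp (fun z : Circle => shift z (sec u))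
        (fun y : Yt => y.val.2) c1.θL).symm
    rw [e1, e2, c2.connL ((sec u).val.1), const_pull' hC c1 ((sec u).val.2),
      sub_zero]
  · -- curvature
    have hJeq : (fun y : Yt => H2.ρ.J (c2.φ y.val.1))
        = fun y : Yt => H1.ρ.J (c1.φ y.val.2) := funext fun y => y.property
    have LB : C.pull Qd.pr (C.d θQ)
        = -C.pull (fun y : Yt => c2.φ y.val.1) H2.wX
          + C.pull (fun y : Yt => c1.φ y.val.2) H1.wX := by
      rw [hC.pull_d, hθQ, d_sub' C hC,
        ← hC.pull_d (fun y : Yt => y.val.1) c2.θL,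
        ← hC.pull_d (fun y : Yt => y.val.2) c1.θL, c2.dθL, c1.dθL,
        pull_sub' C hC c2.φ, pull_sub' C hC c1.φ,
        pull_sub' C hC (fun y : Yt => y.val.1),
        pull_sub' C hC (fun y : Yt => y.val.2)]
      have q2B : C.pull (fun y : Yt => y.val.1)
            (C.pull c2.φ (C.pull H2.ρ.J Q.B))
          = C.pull (fun y : Yt => H2.ρ.J (c2.φ y.val.1)) Q.B := by
        rw [← hC.pull_comp (fun y : Yt => y.val.1) c2.φ (C.pull H2.ρ.J Q.B)]
        exact (hC.pull_comp (fun y : Yt => c2.φ y.val.1) H2.ρ.J Q.B).symm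
      have q1B : C.pull (fun y : Yt => y.val.2)
            (C.pull c1.φ (C.pull H1.ρ.J Q.B))
          = C.pull (fun y : Yt => H1.ρ.J (c1.φ y.val.2)) Q.B := by
        rw [← hC.pull_comp (fun y : Yt => y.val.2) c1.φ (C.pull H1.ρ.J Q.B)]
        exact (hC.pull_comp (fun y : Yt => c1.φ y.val.2) H1.ρ.J Q.B).symm
      have q2w : C.pull (fun y : Yt => y.val.1) (C.pull c2.φ H2.wX)
          = C.pull (fun y : Yt => c2.φ y.val.1) H2.wX :=
        (hC.pull_comp (fun y : Yt => y.val.1) c2.φ H2.wX).symm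
      have q1w : C.pull (fun y : Yt => y.val.2) (C.pull c1.φ H1.wX)
          = C.pull (fun y : Yt => c1.φ y.val.2) H1.wX :=
        (hC.pull_comp (fun y : Yt => y.val.2) c1.φ H1.wX).symm
      rw [q2B, q1B, q2w, q1w, hJeq]
      abel
    have RB : C.pull Qd.pr (C.pull pφ σ)
        = -C.pull (fun y : Yt => c2.φ y.val.1) H2.wX
          + C.pull (fun y : Yt => c1.φ y.val.2) H1.wX := by
      have r0 : C.pull Qd.pr (C.pull pφ σ)
          = C.pull (fun y : Yt => Qb.pr (Φ y)) σ := by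
        rw [← hC.pull_comp Qd.pr pφ σ]
        exact congrArg (fun f : Yt → Qx => C.pull f σ)
          (funext fun y => pφ_pr y)
      rw [r0, hC.pull_comp Φ Qb.pr σ, hσ, hC.pull_add Φ, pull_neg' C hC Φ]
      have r2 : C.pull Φ (C.pull
            (fun q : { q : X2 × X1 // H2.ρ.J q.1 = H1.ρ.J q.2 } => q.val.1)
            H2.wX)
          = C.pull (fun y : Yt => c2.φ y.val.1) H2.wX :=
        (hC.pull_comp Φ
          (fun q : { q : X2 × X1 // H2.ρ.J q.1 = H1.ρ.J q.2 } => q.val.1)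
          H2.wX).symm
      have r3 : C.pull Φ (C.pull
            (fun q : { q : X2 × X1 // H2.ρ.J q.1 = H1.ρ.J q.2 } => q.val.2)
            H1.wX)
          = C.pull (fun y : Yt => c1.φ y.val.2) H1.wX :=
        (hC.pull_comp Φ
          (fun q : { q : X2 × X1 // H2.ρ.J q.1 = H1.ρ.J q.2 } => q.val.2)
          H1.wX).symm
      rw [r2, r3]
    exact Qd.pull_inj 2 (C.d θQ) (C.pull pφ σ) (LB.trans RB.symm)
end
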